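/- arXiv:2511.12345 — 9 statements merged into one kernel-verified Lean document; each statement's English description precedes it below -/
import Mathlib

section
/- Let K ⊆ ℝ² be a compact set, let e : K → ℝ² be continuous with ‖e(x)‖ = 1 for every x ∈ K, and let γ : K → [0, ∞) be continuous. For x ∈ K define the cone C_x = {v ∈ ℝ² : ‖v − ⟨v, e(x)⟩·e(x)‖ ≤ γ(x)·|⟨v, e(x)⟩|}. Assume that the horizontal vector (1, 0) does not belong to C_x for any x ∈ K. Then there exists a constant L ≥ 0 with the following property: for every interval [a, b] ⊆ ℝ with a < b and every Lipschitz function F : [a, b] → ℝ such that (F(t), t) ∈ K for all t ∈ [a, b] and (F′(t), 1) ∈ C_{(F(t), t)} for almost every t ∈ [a, b] (the derivative F′ exists almost everywhere since F is Lipschitz), the function F is L-Lipschitz. -/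
open MeasureTheory Filter Topology

noncomputable def vec2 (a b : ℝ) : EuclideanSpace ℝ (Fin 2) :=
  (WithLp.equiv 2 (Fin 2 → ℝ)).symm ![a, b]

lemma vec2_smul (c a b : ℝ) : c • vec2 a b = vec2 (c*a) (c*b) := by
  ext i; fin_cases i <;> simp [vec2]

lemma vec2_sub (a b c d : ℝ) : vec2 a b - vec2 c d = vec2 (a-c) (b-d) := by
  ext i; fin_cases i <;> simp [vec2]

lemma norm_vec2 (a b : ℝ) : ‖vec2 a b‖ = Real.sqrt (a^2 + b^2) := by
  rw [EuclideanSpace.norm_eq]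
  congr 1
  simp [vec2, Fin.sum_univ_two, sq_abs]

lemma slope_tendsto {G : ℝ → ℝ} {d x : ℝ} (hd : HasDerivAt G d x) :
    Tendsto (fun n : ℕ => (G (x + ((n:ℝ)+1)⁻¹) - G x) / ((n:ℝ)+1)⁻¹) atTop (𝓝 d) := by
  have hslope := hasDerivAt_iff_tendsto_slope.mp hd
  have hx : Tendsto (fun n : ℕ => x + ((n:ℝ)+1)⁻¹) atTop (𝓝[≠] x) := by
    rw [tendsto_nhdsWithin_iff]
    constructor
    · have : Tendsto (fun n : ℕ => ((n:ℝ)+1)⁻¹) atTop (𝓝 0) := by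
        simpa using tendsto_one_div_add_atTop_nhds_zero_nat (𝕜 := ℝ)
      simpa using tendsto_const_nhds.add this
    · filter_upwards with n
      have : (0:ℝ) < ((n:ℝ)+1)⁻¹ := by positivity
      simp only [Set.mem_compl_iff, Set.mem_singleton_iff]
      intro h
      nlinarith [this]
  have := hslope.comp hx
  convert this using 2 with n
  simp [slope_def_field]

lemma lip_ftc {G : ℝ → ℝ} {K' : NNReal} (hG : LipschitzWith K' G) {L a b : ℝ} (hL : 0 ≤ L)
    (hbound : ∀ᵐ u ∂(volume.restrict (Set.Icc a b)), ∀ d, HasDerivAt G d u → |d| ≤ L)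
    {s t : ℝ} (hs : s ∈ Set.Icc a b) (ht : t ∈ Set.Icc a b) (hts : t ≤ s) :
    |G s - G t| ≤ L * (s - t) := by
  have hGc : Continuous G := hG.continuous
  set h : ℕ → ℝ := fun n => ((n:ℝ)+1)⁻¹ with hh
  have hhpos : ∀ n, 0 < h n := fun n => by positivity
  set f : ℕ → ℝ → ℝ := fun n u => (G (u + h n) - G u) / h n with hf
  have hInt : ∀ c d : ℝ, IntervalIntegrable G volume c d :=
    fun c d => hGc.intervalIntegrable c d
  have hval : ∀ n, (∫ u in t..s, f n u) =
      ((∫ u in (t + h n)..(s + h n), G u) - ∫ u in t..s, G u) / h n := by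
    intro n
    rw [show (∫ u in t..s, f n u) = (∫ u in t..s, (G (u + h n) - G u)) / h n from
      intervalIntegral.integral_div _ _]
    have hcomp : Continuous (fun u : ℝ => G (u + h n)) := hGc.comp (by continuity)
    rw [intervalIntegral.integral_sub (hcomp.intervalIntegrable _ _) (hInt _ _)]
    rw [intervalIntegral.integral_comp_add_right]
  set Φ : ℝ → ℝ := fun x => ∫ u in (0:ℝ)..x, G u with hΦ
  have hΦd : ∀ x, HasDerivAt Φ (G x) x := fun x =>
    (hGc.integral_hasStrictDerivAt 0 x).hasDerivAt
  have hval2 : ∀ n, (∫ u in t..s, f n u) =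
      (Φ (s + h n) - Φ s) / h n - (Φ (t + h n) - Φ t) / h n := by
    intro n
    rw [hval n]
    have e1 : (∫ u in (t + h n)..(s + h n), G u) = Φ (s + h n) - Φ (t + h n) := by
      rw [hΦ]
      simp only
      rw [← intervalIntegral.integral_interval_sub_left (hInt 0 (s + h n)) (hInt 0 (t + h n))]
    have e2 : (∫ u in t..s, G u) = Φ s - Φ t := by
      rw [hΦ]
      simp only
      rw [← intervalIntegral.integral_interval_sub_left (hInt 0 s) (hInt 0 t)]
    rw [e1, e2]
    ring
  have stepA : Tendsto (fun n => ∫ u in t..s, f n u) atTop (𝓝 (G s - G t)) := by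
    have h1 := slope_tendsto (hΦd s)
    have h2 := slope_tendsto (hΦd t)
    have := h1.sub h2
    apply this.congr'
    filter_upwards with n
    rw [hval2 n]
  have hdiffae : ∀ᵐ u : ℝ, DifferentiableAt ℝ G u := hG.ae_differentiableAt_real
  have stepB : Tendsto (fun n => ∫ u in t..s, f n u) atTop (𝓝 (∫ u in t..s, deriv G u)) := by
    apply intervalIntegral.tendsto_integral_filter_of_dominated_convergence (fun _ => (K' : ℝ))
    · filter_upwards with n
      exact ((hGc.comp (by continuity)).sub hGc).div_const (h n) |>.aestronglyMeasurable
    · filter_upwards with n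
      filter_upwards with u _
      rw [hf]
      simp only [Real.norm_eq_abs]
      rw [abs_div, abs_of_pos (hhpos n), div_le_iff₀ (hhpos n)]
      calc |G (u + h n) - G u| ≤ K' * |((u + h n) - u)| := by
            have := hG.dist_le_mul (u + h n) u
            rwa [Real.dist_eq, Real.dist_eq] at this
        _ = K' * h n := by rw [show u + h n - u = h n by ring, abs_of_pos (hhpos n)]
    · exact intervalIntegrable_const
    · filter_upwards [hdiffae] with u hu _
      exact slope_tendsto hu.hasDerivAt
  have key : G s - G t = ∫ u in t..s, deriv G u := tendsto_nhds_unique stepA stepB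
  have hsub : Set.uIoc t s ⊆ Set.Icc a b := by
    rw [Set.uIoc_of_le hts]
    exact (Set.Ioc_subset_Icc_self).trans (Set.Icc_subset_Icc ht.1 hs.2)
  have hboundIoc : ∀ᵐ u ∂(volume.restrict (Set.uIoc t s)), ∀ d, HasDerivAt G d u → |d| ≤ L :=
    ae_mono (Measure.restrict_mono hsub le_rfl) hbound
  have habs : |∫ u in t..s, deriv G u| ≤ |∫ u in t..s, L| := by
    rw [show |∫ u in t..s, deriv G u| = ‖∫ u in t..s, deriv G u‖ from (Real.norm_eq_abs _).symm]
    apply intervalIntegral.norm_integral_le_abs_of_norm_le _ intervalIntegrable_const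
    filter_upwards [hboundIoc, ae_restrict_of_ae hdiffae] with u h1 h2
    rw [Real.norm_eq_abs]
    exact h1 _ h2.hasDerivAt
  rw [key]
  calc |∫ u in t..s, deriv G u| ≤ |∫ u in t..s, L| := habs
    _ = L * (s - t) := by
        rw [intervalIntegral.integral_const, smul_eq_mul,
          abs_of_nonneg (mul_nonneg (sub_nonneg.mpr hts) hL), mul_comm]

/-- Any Lipschitz graph tangent a.e. to a continuous cone field avoiding the
horizontal direction has a uniformly bounded Lipschitz constant. -/
theorem statement0
    (K : Set (EuclideanSpace ℝ (Fin 2))) (hK : IsCompact K)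
    (e : EuclideanSpace ℝ (Fin 2) → EuclideanSpace ℝ (Fin 2))
    (he : ContinuousOn e K) (heNorm : ∀ x ∈ K, ‖e x‖ = 1)
    (γ : EuclideanSpace ℝ (Fin 2) → ℝ)
    (hγcont : ContinuousOn γ K) (hγ0 : ∀ x ∈ K, 0 ≤ γ x)
    (C : EuclideanSpace ℝ (Fin 2) → Set (EuclideanSpace ℝ (Fin 2)))
    (hC : ∀ x, C x =
      {v | ‖v - (inner ℝ v (e x) : ℝ) • e x‖ ≤ γ x * |(inner ℝ v (e x) : ℝ)|})
    (hHoriz : ∀ x ∈ K, vec2 1 0 ∉ C x) :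
    ∃ L : ℝ, 0 ≤ L ∧
      ∀ a b : ℝ, a < b → ∀ F : ℝ → ℝ,
        (∃ K' : NNReal, LipschitzOnWith K' F (Set.Icc a b)) →
        (∀ t ∈ Set.Icc a b, vec2 (F t) t ∈ K) →
        (∀ᵐ t ∂(volume.restrict (Set.Icc a b)),
          ∀ d : ℝ, HasDerivAt F d t → vec2 d 1 ∈ C (vec2 (F t) t)) →
        ∀ s ∈ Set.Icc a b, ∀ t ∈ Set.Icc a b, |F s - F t| ≤ L * |s - t| := by
  classical
  -- Step 1: a uniform bound on slopes allowed by the cone field.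
  have main : ∃ L : ℝ, 0 ≤ L ∧ ∀ x ∈ K, ∀ d : ℝ, vec2 d 1 ∈ C x → |d| ≤ L := by
    rcases K.eq_empty_or_nonempty with hKe | hKne
    · exact ⟨0, le_rfl, by simp [hKe]⟩
    set v₀ : EuclideanSpace ℝ (Fin 2) := vec2 1 0 with hv₀
    set h : EuclideanSpace ℝ (Fin 2) → ℝ :=
      fun x => ‖v₀ - (inner ℝ v₀ (e x) : ℝ) • e x‖ - γ x * |(inner ℝ v₀ (e x) : ℝ)| with hhdef
    have hi : ContinuousOn (fun x => (inner ℝ v₀ (e x) : ℝ)) K := continuousOn_const.inner he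
    have hcont : ContinuousOn h K :=
      ((continuousOn_const.sub (hi.smul he)).norm).sub (hγcont.mul hi.abs)
    obtain ⟨x₀, hx₀K, hx₀min⟩ := hK.exists_isMinOn hKne hcont
    obtain ⟨x₁, hx₁K, hx₁max⟩ := hK.exists_isMaxOn hKne hγcont
    set ε : ℝ := h x₀ with hεdef
    have hεpos : 0 < ε := by
      have := hHoriz x₀ hx₀K
      rw [hC x₀] at this
      simp only [Set.mem_setOf_eq, not_le] at this
      simpa [hεdef, hhdef, sub_pos] using this
    set Γ : ℝ := γ x₁ with hΓdef
    have hΓ0 : 0 ≤ Γ := hγ0 x₁ hx₁K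
    refine ⟨(2 + Γ) / ε, by positivity, ?_⟩
    intro x hx d hd
    rw [hC x] at hd
    simp only [Set.mem_setOf_eq] at hd
    by_cases hd0 : d = 0
    · rw [hd0]; simp; positivity
    have hdpos : 0 < |d| := abs_pos.mpr hd0
    set w : EuclideanSpace ℝ (Fin 2) := vec2 1 d⁻¹ with hwdef
    have hvw : vec2 d 1 = d • w := by
      rw [hwdef, vec2_smul]
      congr 1 <;> field_simp
    have hinner : (inner ℝ (vec2 d 1) (e x) : ℝ) = d * (inner ℝ w (e x) : ℝ) := by
      rw [hvw, real_inner_smul_left]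
    set c' : ℝ := (inner ℝ w (e x) : ℝ) with hc'
    have hw : ‖w - c' • e x‖ ≤ γ x * |c'| := by
      have h1 : vec2 d 1 - (inner ℝ (vec2 d 1) (e x) : ℝ) • e x = d • (w - c' • e x) := by
        rw [hinner, smul_sub, smul_smul, ← hvw]
      rw [h1, norm_smul, Real.norm_eq_abs, hinner, abs_mul,
        show γ x * (|d| * |c'|) = |d| * (γ x * |c'|) from by ring] at hd
      exact le_of_mul_le_mul_left hd hdpos
    set δv : EuclideanSpace ℝ (Fin 2) := v₀ - w with hδv
    have hδnorm : ‖δv‖ = |d|⁻¹ := by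
      rw [hδv, hv₀, hwdef, vec2_sub, norm_vec2]
      rw [show (1:ℝ) - 1 = 0 by ring]
      rw [show (0:ℝ)^2 + (0 - d⁻¹)^2 = (d⁻¹)^2 by ring, Real.sqrt_sq_eq_abs, abs_inv]
    set c0 : ℝ := (inner ℝ v₀ (e x) : ℝ) with hc0
    have hcs : |(inner ℝ δv (e x) : ℝ)| ≤ ‖δv‖ := by
      calc |(inner ℝ δv (e x) : ℝ)| ≤ ‖δv‖ * ‖e x‖ := abs_real_inner_le_norm δv (e x)
        _ = ‖δv‖ := by rw [heNorm x hx, mul_one]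
    have hsplit : v₀ - c0 • e x = (w - c' • e x) + (δv - (inner ℝ δv (e x) : ℝ) • e x) := by
      have : (inner ℝ δv (e x) : ℝ) = c0 - c' := by rw [hδv, inner_sub_left, hc0, hc']
      rw [this, hδv, sub_smul]
      abel
    have hγΓ : γ x ≤ Γ := hx₁max hx
    have hγx : 0 ≤ γ x := hγ0 x hx
    have hhx : h x ≤ (2 + Γ) * |d|⁻¹ := by
      have t1 : ‖v₀ - c0 • e x‖ ≤ γ x * |c'| + 2 * ‖δv‖ := by
        rw [hsplit]
        calc ‖(w - c' • e x) + (δv - (inner ℝ δv (e x) : ℝ) • e x)‖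
            ≤ ‖w - c' • e x‖ + ‖δv - (inner ℝ δv (e x) : ℝ) • e x‖ := norm_add_le _ _
          _ ≤ γ x * |c'| + (‖δv‖ + ‖(inner ℝ δv (e x) : ℝ) • e x‖) :=
              add_le_add hw (norm_sub_le _ _)
          _ ≤ γ x * |c'| + 2 * ‖δv‖ := by
              rw [norm_smul, Real.norm_eq_abs, heNorm x hx, mul_one]
              linarith [hcs]
      have t2 : |c'| - ‖δv‖ ≤ |c0| := by
        have h3 : (inner ℝ δv (e x) : ℝ) = c0 - c' := by rw [hδv, inner_sub_left, hc0, hc']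
        have h2 := hcs
        rw [h3] at h2
        have := abs_sub_abs_le_abs_sub c' c0
        rw [abs_sub_comm] at this
        linarith
      have hle : h x ≤ γ x * |c'| + 2 * ‖δv‖ - γ x * (|c'| - ‖δv‖) := by
        rw [hhdef]
        simp only
        have := mul_le_mul_of_nonneg_left t2 hγx
        linarith [t1]
      calc h x ≤ (2 + γ x) * ‖δv‖ := by linarith [hle]
        _ ≤ (2 + Γ) * ‖δv‖ := by
            apply mul_le_mul_of_nonneg_right (by linarith) (norm_nonneg _)
        _ = (2 + Γ) * |d|⁻¹ := by rw [hδnorm]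
    have hmin : ε ≤ h x := hx₀min hx
    have hfin : ε * |d| ≤ 2 + Γ := by
      calc ε * |d| ≤ ((2 + Γ) * |d|⁻¹) * |d| :=
            mul_le_mul_of_nonneg_right (hmin.trans hhx) hdpos.le
        _ = 2 + Γ := by field_simp
    rw [le_div_iff₀ hεpos, mul_comm]
    exact hfin
  -- Step 2: apply the a.e. FTC bound.
  obtain ⟨L, hL0, hLbound⟩ := main
  refine ⟨L, hL0, ?_⟩
  rintro a b hab F ⟨K', hLip⟩ hmem hae s hsI t htI
  obtain ⟨G, hGlip, hEq⟩ := hLip.extend_real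
  have hpairnull : (volume : Measure ℝ) ({a, b} : Set ℝ) = 0 := by
    have : ({a, b} : Set ℝ).Finite := (Set.finite_singleton b).insert a
    exact this.measure_zero volume
  have hpair : ∀ᵐ u ∂(volume.restrict (Set.Icc a b)), u ∉ ({a, b} : Set ℝ) := by
    apply ae_restrict_of_ae
    rw [ae_iff]
    convert hpairnull using 2
    ext u
    simp [not_imp_not, or_iff_not_imp_left, Set.mem_insert_iff]
  have hboundG : ∀ᵐ u ∂(volume.restrict (Set.Icc a b)), ∀ d, HasDerivAt G d u → |d| ≤ L := by
    filter_upwards [hae, ae_restrict_mem measurableSet_Icc, hpair] with u hu huIcc hune d hdG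
    have ha : u ≠ a := fun h => hune (by simp [h])
    have hb : u ≠ b := fun h => hune (by simp [h])
    have huIoo : u ∈ Set.Ioo a b := ⟨lt_of_le_of_ne huIcc.1 (Ne.symm ha), lt_of_le_of_ne huIcc.2 hb⟩
    have hnb : Set.Icc a b ∈ 𝓝 u := Icc_mem_nhds huIoo.1 huIoo.2
    have hFG : F =ᶠ[𝓝 u] G := Filter.eventuallyEq_of_mem hnb hEq
    have hFd : HasDerivAt F d u := hdG.congr_of_eventuallyEq hFG
    exact hLbound _ (hmem u huIcc) d (hu d hFd)
  have hFG : F s = G s := hEq hsI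
  have hFG' : F t = G t := hEq htI
  rcases le_total t s with hts | hst
  · have := lip_ftc hGlip hL0 hboundG hsI htI hts
    rw [hFG, hFG', abs_of_nonneg (sub_nonneg.mpr hts)]
    exact this
  · have := lip_ftc hGlip hL0 hboundG htI hsI hst
    rw [hFG, hFG', abs_sub_comm, abs_of_nonpos (sub_nonpos.mpr hst), neg_sub]
    exact this
end

section
/- Let L > 0. There exists γ₀ > 0, depending only on L, with the following property. Let κ > 0, let γ ∈ (0, γ₀), let q satisfy 10⁻²·κ ≤ q ≤ κ, let F : [−q, q] → ℝ be L-Lipschitz with sup_{|t| ≤ q} |F(t)| ≤ κ and |F(0)| ≤ 10⁻³·κ, and let G : [−κ, κ] → ℝ be γ-Lipschitz with sup_{|s| ≤ κ} |G(s)| ≤ κ and |G(0)| < min(10⁻³·κ, 10⁻³·κ/L). Then: (1) the two curves {(F(t), t) : |t| ≤ q} and {(s, G(s)) : |s| ≤ κ} intersect in exactly one point; equivalently, there exists a unique t* ∈ [−q, q] with G(F(t*)) = t*, and the unique intersection point is (F(t*), t*); (2) moreover |t*| < 2·10⁻²·κ and |F(t*)| < 2·10⁻²·κ. -/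
/-- Unique transverse intersection of an admissible u-manifold (the Lipschitz
vertical graph of `F`) and an admissible s-manifold (the Lipschitz horizontal
graph of `G`). -/
theorem statement1 (L : ℝ) (hL : 0 < L) :
    ∃ γ₀ : ℝ, 0 < γ₀ ∧
      ∀ κ γ q : ℝ, 0 < κ → 0 < γ → γ < γ₀ → κ / 100 ≤ q → q ≤ κ →
      ∀ F G : ℝ → ℝ,
        (∀ s ∈ Set.Icc (-q) q, ∀ t ∈ Set.Icc (-q) q, |F s - F t| ≤ L * |s - t|) →
        (∀ t ∈ Set.Icc (-q) q, |F t| ≤ κ) →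
        |F 0| ≤ κ / 1000 →
        (∀ s ∈ Set.Icc (-κ) κ, ∀ t ∈ Set.Icc (-κ) κ, |G s - G t| ≤ γ * |s - t|) →
        (∀ s ∈ Set.Icc (-κ) κ, |G s| ≤ κ) →
        |G 0| < min (κ / 1000) (κ / 1000 / L) →
        ∃ tstar ∈ Set.Icc (-q) q,
          G (F tstar) = tstar ∧
          (∀ t ∈ Set.Icc (-q) q, G (F t) = t → t = tstar) ∧
          {p : ℝ × ℝ | ∃ t ∈ Set.Icc (-q) q, p = (F t, t)} ∩
              {p : ℝ × ℝ | ∃ s ∈ Set.Icc (-κ) κ, p = (s, G s)} =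
            {(F tstar, tstar)} ∧
          |tstar| < 2 * κ / 100 ∧ |F tstar| < 2 * κ / 100 := by
  refine ⟨min (1 / (2 * L)) (1 / 1000), lt_min (by positivity) (by norm_num), ?_⟩
  intro κ γ q hκ hγ hγ0 hq1 hq2 F G hFlip hFbd hF0 hGlip hGbd hG0
  have hγL : γ * L < 1 / 2 := by
    have h1 : γ < 1 / (2 * L) := lt_of_lt_of_le hγ0 (min_le_left _ _)
    calc γ * L < (1 / (2 * L)) * L := by nlinarith
    _ = 1 / 2 := by field_simp
  have hγs : γ < 1 / 1000 := lt_of_lt_of_le hγ0 (min_le_right _ _)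
  have hq : 0 < q := lt_of_lt_of_le (by linarith) hq1
  have h0q : (0 : ℝ) ∈ Set.Icc (-q) q := by constructor <;> linarith
  have h0κ : (0 : ℝ) ∈ Set.Icc (-κ) κ := by constructor <;> linarith
  have hFmem : ∀ t ∈ Set.Icc (-q) q, F t ∈ Set.Icc (-κ) κ := by
    intro t ht
    have := hFbd t ht
    rw [abs_le] at this
    exact ⟨this.1, this.2⟩
  have hG0' : |G 0| < κ / 1000 := lt_of_lt_of_le hG0 (min_le_left _ _)
  have hG0L : |G 0| < κ / 1000 / L := lt_of_lt_of_le hG0 (min_le_right _ _)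
  -- bound on |G (F t)|
  have hGF : ∀ t ∈ Set.Icc (-q) q, |G (F t)| < κ / 500 := by
    intro t ht
    have h1 : |G (F t) - G 0| ≤ γ * |F t - 0| := hGlip _ (hFmem t ht) 0 h0κ
    have h2 : |F t| ≤ κ := hFbd t ht
    have h3 : γ * |F t - 0| ≤ γ * κ := by
      rw [sub_zero]; exact mul_le_mul_of_nonneg_left h2 hγ.le
    have h4 : |G (F t)| ≤ |G (F t) - G 0| + |G 0| := by
      calc |G (F t)| = |(G (F t) - G 0) + G 0| := by ring_nf
      _ ≤ |G (F t) - G 0| + |G 0| := abs_add_le _ _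
    nlinarith
  -- continuity
  have hcont : ContinuousOn (fun t => G (F t) - t) (Set.Icc (-q) q) := by
    have hF : LipschitzOnWith L.toNNReal F (Set.Icc (-q) q) := by
      rw [lipschitzOnWith_iff_dist_le_mul]
      intro x hx y hy
      have := hFlip x hx y hy
      simpa [Real.dist_eq, Real.coe_toNNReal L hL.le] using this
    have hG : LipschitzOnWith γ.toNNReal G (Set.Icc (-κ) κ) := by
      rw [lipschitzOnWith_iff_dist_le_mul]
      intro x hx y hy
      have := hGlip x hx y hy
      simpa [Real.dist_eq, Real.coe_toNNReal γ hγ.le] using this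
    exact ((hG.continuousOn.comp hF.continuousOn hFmem).sub continuousOn_id)
  -- IVT
  have hneg : G (F q) - q ≤ 0 := by
    have := hGF q (Set.right_mem_Icc.2 (by linarith))
    have := abs_le.1 this.le
    linarith
  have hpos : 0 ≤ G (F (-q)) - (-q) := by
    have := hGF (-q) (Set.left_mem_Icc.2 (by linarith))
    have := abs_le.1 this.le
    linarith
  have hIVT := intermediate_value_Icc' (by linarith : -q ≤ q) hcont
  obtain ⟨tstar, htmem, htz⟩ := hIVT ⟨hneg, hpos⟩
  have hfix : G (F tstar) = tstar := by
    have : G (F tstar) - tstar = 0 := htz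
    linarith
  -- uniqueness
  have huniq : ∀ t ∈ Set.Icc (-q) q, G (F t) = t → t = tstar := by
    intro t ht hfix'
    by_contra hne
    have habs : 0 < |t - tstar| := abs_pos.2 (sub_ne_zero.2 hne)
    have h1 : |G (F t) - G (F tstar)| ≤ γ * |F t - F tstar| :=
      hGlip _ (hFmem t ht) _ (hFmem tstar htmem)
    have h2 : |F t - F tstar| ≤ L * |t - tstar| := hFlip t ht tstar htmem
    have h3 : |t - tstar| ≤ γ * (L * |t - tstar|) := by
      calc |t - tstar| = |G (F t) - G (F tstar)| := by rw [hfix', hfix]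
      _ ≤ γ * |F t - F tstar| := h1
      _ ≤ γ * (L * |t - tstar|) := mul_le_mul_of_nonneg_left h2 hγ.le
    nlinarith
  -- bounds
  have htb : |tstar| < κ / 500 := by
    rw [← hfix]; exact hGF tstar htmem
  have htb2 : |tstar| < 2 * κ / 100 := by linarith
  have hFtb : |F tstar| < 2 * κ / 100 := by
    have h1 : |F tstar - F 0| ≤ L * |tstar - 0| := hFlip tstar htmem 0 h0q
    rw [sub_zero] at h1
    have h2 : |G (F tstar) - G 0| ≤ γ * |F tstar - 0| :=
      hGlip _ (hFmem tstar htmem) 0 h0κ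
    rw [sub_zero] at h2
    have h3 := abs_sub_abs_le_abs_sub (G (F tstar)) (G 0)
    nth_rewrite 1 [hfix] at h3
    have hcomb : |tstar| ≤ γ * |F tstar| + |G 0| := by linarith
    have h4 : |F tstar| ≤ |F tstar - F 0| + |F 0| := by
      calc |F tstar| = |(F tstar - F 0) + F 0| := by ring_nf
      _ ≤ _ := abs_add_le _ _
    have h5 : |G 0| * L < κ / 1000 := (lt_div_iff₀ hL).mp hG0L
    nlinarith [mul_le_mul_of_nonneg_left hcomb hL.le,
      mul_le_mul_of_nonneg_right hγL.le (abs_nonneg (F tstar)),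
      abs_nonneg (F tstar), hF0]
  refine ⟨tstar, htmem, hfix, huniq, ?_, htb2, hFtb⟩
  ext p
  simp only [Set.mem_inter_iff, Set.mem_setOf_eq, Set.mem_singleton_iff]
  constructor
  · rintro ⟨⟨t, ht, rfl⟩, ⟨s, hs, heq⟩⟩
    have h1 : F t = s := (Prod.ext_iff.1 heq).1
    have h2 : t = G s := (Prod.ext_iff.1 heq).2
    have : G (F t) = t := by rw [h1, ← h2]
    have := huniq t ht this
    subst this; rfl
  · rintro rfl
    exact ⟨⟨tstar, htmem, rfl⟩, ⟨F tstar, hFmem tstar htmem, by rw [hfix]⟩⟩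
end

section
/- Let χ > 0 and L > 0. There exists ε₀ > 0, depending only on χ and L, with the following property for every ε ∈ (0, ε₀). Let q > 0 and q′ with 10⁻²·q ≤ q′ ≤ q, let A, B ∈ ℝ with |A| ≤ exp(−χ/2) and |B| ≥ exp(χ/2), and let h₁, h₂ : [−q, q]² → ℝ be C¹ functions with h₁(0,0) = h₂(0,0) = 0 and with the operator norm of the derivative of h_i at every point of [−q, q]² at most ε (i = 1, 2). Define f : [−q, q]² → ℝ² by f(u, v) = (A·u + h₁(u, v), B·v + h₂(u, v)). Let F : [−q′, q′] → ℝ be L-Lipschitz with sup_{|t| ≤ q′} |F(t)| ≤ q. Then there exists an L-Lipschitz function G : [−q′·exp(χ/2 − √ε), q′·exp(χ/2 − √ε)] → ℝ such that {(G(τ), τ) : |τ| ≤ q′·exp(χ/2 − √ε)} ⊆ f({(F(t), t) : |t| ≤ q′}), and moreover |G(0)| ≤ exp(−χ/4)·|F(0)|. -/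
private lemma aux_exp {χ ε : ℝ} (hχ : 0 < χ) (hε : 0 < ε) (hε1 : ε ≤ 1/40000) :
    Real.exp (χ/2 - Real.sqrt ε) + 100*ε ≤ Real.exp (χ/2) := by
  set s := Real.sqrt ε with hs
  have hs0 : 0 ≤ s := Real.sqrt_nonneg ε
  have hs2 : s^2 = ε := Real.sq_sqrt hε.le
  have hsle : s ≤ 1/200 := by
    have h : (1/200 : ℝ) = Real.sqrt (1/40000) := by
      rw [show (1/40000:ℝ) = (1/200)^2 by norm_num, Real.sqrt_sq (by norm_num)]
    rw [h]
    exact Real.sqrt_le_sqrt hε1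
  have h1 : Real.exp (χ/2 - s) = Real.exp (χ/2) * Real.exp (-s) := by
    rw [← Real.exp_add]; ring_nf
  have h2 : Real.exp (-s) * (1 + s) ≤ 1 := by
    have h3 := Real.add_one_le_exp s
    have h4 : Real.exp (-s) * Real.exp s = 1 := by rw [← Real.exp_add]; simp
    nlinarith [Real.exp_pos (-s)]
  have h5 : 1 - s ≤ Real.exp (-s) := by
    have := Real.add_one_le_exp (-s); linarith
  have hE : 1 ≤ Real.exp (χ/2) := Real.one_le_exp (by linarith)
  rw [h1, ← hs2]
  nlinarith [Real.exp_pos (-s), mul_nonneg hs0 hs0]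

set_option maxHeartbeats 4000000 in
/-- The graph transform: the image under a C¹ perturbation of a hyperbolic
linear map of an admissible Lipschitz vertical graph contains an admissible
Lipschitz vertical graph over an expanded interval. -/
theorem statement3 (χ L : ℝ) (hχ : 0 < χ) (hL : 0 < L) :
    ∃ ε₀ : ℝ, 0 < ε₀ ∧
      ∀ ε : ℝ, 0 < ε → ε < ε₀ →
      ∀ q q' : ℝ, 0 < q → q / 100 ≤ q' → q' ≤ q →
      ∀ A B : ℝ, |A| ≤ Real.exp (-(χ / 2)) → Real.exp (χ / 2) ≤ |B| →
      ∀ h₁ h₂ : ℝ × ℝ → ℝ, ∀ D₁ D₂ : ℝ × ℝ → (ℝ × ℝ) →L[ℝ] ℝ,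
        h₁ (0, 0) = 0 → h₂ (0, 0) = 0 →
        (∀ z ∈ Set.Icc (-q) q ×ˢ Set.Icc (-q) q,
          HasFDerivWithinAt h₁ (D₁ z) (Set.Icc (-q) q ×ˢ Set.Icc (-q) q) z) →
        (∀ z ∈ Set.Icc (-q) q ×ˢ Set.Icc (-q) q,
          HasFDerivWithinAt h₂ (D₂ z) (Set.Icc (-q) q ×ˢ Set.Icc (-q) q) z) →
        ContinuousOn D₁ (Set.Icc (-q) q ×ˢ Set.Icc (-q) q) →
        ContinuousOn D₂ (Set.Icc (-q) q ×ˢ Set.Icc (-q) q) →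
        (∀ z ∈ Set.Icc (-q) q ×ˢ Set.Icc (-q) q, ‖D₁ z‖ ≤ ε) →
        (∀ z ∈ Set.Icc (-q) q ×ˢ Set.Icc (-q) q, ‖D₂ z‖ ≤ ε) →
      ∀ F : ℝ → ℝ,
        (∀ s ∈ Set.Icc (-q') q', ∀ t ∈ Set.Icc (-q') q', |F s - F t| ≤ L * |s - t|) →
        (∀ t ∈ Set.Icc (-q') q', |F t| ≤ q) →
        ∃ G : ℝ → ℝ,
          (∀ s ∈ Set.Icc (-(q' * Real.exp (χ / 2 - Real.sqrt ε)))
              (q' * Real.exp (χ / 2 - Real.sqrt ε)),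
            ∀ t ∈ Set.Icc (-(q' * Real.exp (χ / 2 - Real.sqrt ε)))
              (q' * Real.exp (χ / 2 - Real.sqrt ε)),
            |G s - G t| ≤ L * |s - t|) ∧
          (∀ τ ∈ Set.Icc (-(q' * Real.exp (χ / 2 - Real.sqrt ε)))
              (q' * Real.exp (χ / 2 - Real.sqrt ε)),
            ∃ t ∈ Set.Icc (-q') q',
              (G τ, τ) = (A * F t + h₁ (F t, t), B * t + h₂ (F t, t))) ∧
          |G 0| ≤ Real.exp (-(χ / 4)) * |F 0| := by
  classical
  have hEE : Real.exp (-(χ/2)) < Real.exp (χ/2) := Real.exp_lt_exp.mpr (by linarith)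
  have hEE2 : Real.exp (-(χ/2)) < Real.exp (-(χ/4)) := Real.exp_lt_exp.mpr (by linarith)
  refine ⟨min (min (1/40000) (1/(4*L+4)))
      (min (L*(Real.exp (χ/2) - Real.exp (-(χ/2)))/(L+1)^2)
        ((Real.exp (-(χ/4)) - Real.exp (-(χ/2)))/(2*(1+L)))), ?_, ?_⟩
  · refine lt_min (lt_min (by norm_num) (by positivity)) (lt_min ?_ ?_)
    · exact div_pos (mul_pos hL (by linarith)) (by positivity)
    · exact div_pos (by linarith) (by positivity)
  intro ε hε hεlt q q' hq hq1 hq2 A B hA hB h₁ h₂ D₁ D₂ h₁0 h₂0 hD₁ hD₂ hC₁ hC₂ hN₁ hN₂ F hF hFq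
  have hc1 : ε < 1/40000 := lt_of_lt_of_le hεlt ((min_le_left _ _).trans (min_le_left _ _))
  have hc2 : ε < 1/(4*L+4) := lt_of_lt_of_le hεlt ((min_le_left _ _).trans (min_le_right _ _))
  have hc3 : ε * (L+1)^2 < L*(Real.exp (χ/2) - Real.exp (-(χ/2))) := by
    have h := lt_of_lt_of_le hεlt ((min_le_right _ _).trans (min_le_left _ _))
    rwa [lt_div_iff₀ (by positivity)] at h
  have hc4 : ε * (2*(1+L)) < Real.exp (-(χ/4)) - Real.exp (-(χ/2)) := by
    have h := lt_of_lt_of_le hεlt ((min_le_right _ _).trans (min_le_right _ _))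
    rwa [lt_div_iff₀ (by positivity)] at h
  have hc2' : ε * (4*L+4) < 1 := by rwa [lt_div_iff₀ (by positivity)] at hc2
  have hεhalf : ε ≤ 1/2 := by nlinarith
  have hLε : L * ε ≤ 1/4 := by nlinarith
  have hq' : 0 < q' := by linarith
  set r := q' * Real.exp (χ/2 - Real.sqrt ε) with hr_def
  have hrpos : 0 < r := mul_pos hq' (Real.exp_pos _)
  set S := Set.Icc (-q) q ×ˢ Set.Icc (-q) q with hS
  have hconv : Convex ℝ S := (convex_Icc _ _).prod (convex_Icc _ _)
  have hnorm : ∀ x y : ℝ, ‖((x,y) : ℝ × ℝ)‖ = max |x| |y| := by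
    intro x y; rw [Prod.norm_def]; simp [Real.norm_eq_abs]
  have hlip₁ : ∀ z ∈ S, ∀ w ∈ S, |h₁ z - h₁ w| ≤ ε * ‖z - w‖ := by
    intro z hz w hw
    have h := Convex.norm_image_sub_le_of_norm_hasFDerivWithin_le hD₁ hN₁ hconv hw hz
    simpa [Real.norm_eq_abs] using h
  have hlip₂ : ∀ z ∈ S, ∀ w ∈ S, |h₂ z - h₂ w| ≤ ε * ‖z - w‖ := by
    intro z hz w hw
    have h := Convex.norm_image_sub_le_of_norm_hasFDerivWithin_le hD₂ hN₂ hconv hw hz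
    simpa [Real.norm_eq_abs] using h
  have hmem : ∀ t ∈ Set.Icc (-q') q', ((F t, t) : ℝ × ℝ) ∈ S := by
    intro t ht
    exact Set.mk_mem_prod (Set.mem_Icc.mpr (abs_le.mp (hFq t ht)))
      (Set.mem_Icc.mpr ⟨by linarith [ht.1], by linarith [ht.2]⟩)
  have h00 : ((0:ℝ),(0:ℝ)) ∈ S :=
    Set.mk_mem_prod (Set.mem_Icc.mpr ⟨by linarith, by linarith⟩)
      (Set.mem_Icc.mpr ⟨by linarith, by linarith⟩)
  have hgraphdiff : ∀ a ∈ Set.Icc (-q') q', ∀ b ∈ Set.Icc (-q') q',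
      ‖((F a, a) : ℝ × ℝ) - (F b, b)‖ ≤ (L+1) * |a - b| := by
    intro a ha b hb
    rw [Prod.mk_sub_mk, hnorm]
    exact max_le ((hF a ha b hb).trans (by nlinarith [abs_nonneg (a-b)]))
      (by nlinarith [abs_nonneg (a-b)])
  -- expansion estimate
  have hexp : ∀ a ∈ Set.Icc (-q') q', ∀ b ∈ Set.Icc (-q') q',
      (Real.exp (χ/2) - ε*(L+1)) * |a - b| ≤
        |(B*a + h₂ (F a, a)) - (B*b + h₂ (F b, b))| := by
    intro a ha b hb
    have h2d : |h₂ (F a, a) - h₂ (F b, b)| ≤ ε * ((L+1)*|a-b|) :=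
      (hlip₂ _ (hmem a ha) _ (hmem b hb)).trans
        (mul_le_mul_of_nonneg_left (hgraphdiff a ha b hb) hε.le)
    have hBab : Real.exp (χ/2) * |a - b| ≤ |B*(a-b)| := by
      rw [abs_mul]; exact mul_le_mul_of_nonneg_right hB (abs_nonneg _)
    have key : (B*a + h₂ (F a, a)) - (B*b + h₂ (F b, b))
        = B*(a-b) + (h₂ (F a, a) - h₂ (F b, b)) := by ring
    have habs : |B*(a-b)| ≤ |B*(a-b) + (h₂ (F a, a) - h₂ (F b, b))|
        + |h₂ (F a, a) - h₂ (F b, b)| := by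
      have h := abs_add_le (B*(a-b) + (h₂ (F a, a) - h₂ (F b, b))) (-(h₂ (F a, a) - h₂ (F b, b)))
      rw [add_neg_cancel_right, abs_neg] at h
      exact h
    rw [key]; nlinarith
  -- bound on h₂ along the graph
  have hbound : ∀ t ∈ Set.Icc (-q') q', |h₂ (F t, t)| ≤ ε * q := by
    intro t ht
    have h := hlip₂ _ (hmem t ht) _ h00
    rw [h₂0, sub_zero] at h
    have hz : ((F t, t) : ℝ × ℝ) - (0, 0) = (F t, t) := by simp
    rw [hz, hnorm] at h
    have htq : |t| ≤ q := abs_le.mpr ⟨by linarith [ht.1], by linarith [ht.2]⟩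
    have hmx : max |F t| |t| ≤ q := max_le (hFq t ht) htq
    exact h.trans (mul_le_mul_of_nonneg_left hmx hε.le)
  -- continuity of γ
  have hFlip : LipschitzOnWith (Real.toNNReal L) F (Set.Icc (-q') q') := by
    rw [lipschitzOnWith_iff_dist_le_mul]
    intro x hx y hy
    rw [Real.dist_eq, Real.dist_eq, Real.coe_toNNReal L hL.le]
    exact hF x hx y hy
  have hγcont : ContinuousOn (fun t => B*t + h₂ (F t, t)) (Set.Icc (-q') q') := by
    have hc : ContinuousOn h₂ S := fun z hz => (hD₂ z hz).continuousWithinAt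
    have hmap : ContinuousOn (fun t => ((F t, t) : ℝ × ℝ)) (Set.Icc (-q') q') :=
      ContinuousOn.prodMk hFlip.continuousOn continuousOn_id
    exact ((continuous_const.mul continuous_id).continuousOn).add (hc.comp hmap hmem)
  -- surjectivity over [-r, r]
  have hsurj : ∀ τ ∈ Set.Icc (-r) r, ∃ t, t ∈ Set.Icc (-q') q' ∧ B*t + h₂ (F t, t) = τ := by
    have hq'mem : q' ∈ Set.Icc (-q') q' := by constructor <;> linarith
    have hq'mem' : -q' ∈ Set.Icc (-q') q' := by constructor <;> linarith
    have hb1 := abs_le.mp (hbound q' hq'mem)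
    have hb2 := abs_le.mp (hbound (-q') hq'mem')
    have hεq : ε * q ≤ 100 * ε * q' := by nlinarith
    have haux := aux_exp hχ hε hc1.le
    have hkey : r + 100*ε*q' ≤ Real.exp (χ/2) * q' := by
      rw [hr_def]; nlinarith
    intro τ hτ
    rcases lt_or_ge 0 B with hBpos | hBneg
    · have hBE : Real.exp (χ/2) ≤ B := by rwa [abs_of_pos hBpos] at hB
      have ha1 : B*(-q') + h₂ (F (-q'), -q') ≤ -r := by nlinarith
      have ha2 : r ≤ B*q' + h₂ (F q', q') := by nlinarith
      have hsub := intermediate_value_Icc (by linarith : -q' ≤ q') hγcont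
      have hmi : τ ∈ Set.Icc (B*(-q') + h₂ (F (-q'), -q')) (B*q' + h₂ (F q', q')) :=
        ⟨by linarith [hτ.1], by linarith [hτ.2]⟩
      obtain ⟨t, ht, hteq⟩ := hsub hmi
      exact ⟨t, ht, hteq⟩
    · have hBE : Real.exp (χ/2) ≤ -B := by rwa [abs_of_nonpos hBneg] at hB
      have ha1 : B*q' + h₂ (F q', q') ≤ -r := by nlinarith
      have ha2 : r ≤ B*(-q') + h₂ (F (-q'), -q') := by nlinarith
      have hsub := intermediate_value_Icc' (by linarith : -q' ≤ q') hγcont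
      have hmi : τ ∈ Set.Icc (B*q' + h₂ (F q', q')) (B*(-q') + h₂ (F (-q'), -q')) :=
        ⟨by linarith [hτ.1], by linarith [hτ.2]⟩
      obtain ⟨t, ht, hteq⟩ := hsub hmi
      exact ⟨t, ht, hteq⟩
  obtain ⟨T, hT⟩ : ∃ T : ℝ → ℝ, ∀ τ ∈ Set.Icc (-r) r,
      T τ ∈ Set.Icc (-q') q' ∧ B * T τ + h₂ (F (T τ), T τ) = τ := by
    refine ⟨fun τ => if h : ∃ t, t ∈ Set.Icc (-q') q' ∧ B*t + h₂ (F t, t) = τ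
        then h.choose else 0, fun τ hτ => ?_⟩
    have hP := hsurj τ hτ
    simp only [dif_pos hP]
    exact hP.choose_spec
  refine ⟨fun τ => A * F (T τ) + h₁ (F (T τ), T τ), ?_, ?_, ?_⟩
  · -- Lipschitz property
    intro s hs t ht
    obtain ⟨has, hγa⟩ := hT s hs
    obtain ⟨hbt, hγb⟩ := hT t ht
    have hFd : |F (T s) - F (T t)| ≤ L * |T s - T t| := hF _ has _ hbt
    have h1d : |h₁ (F (T s), T s) - h₁ (F (T t), T t)| ≤ ε * ((L+1)*|T s - T t|) :=
      (hlip₁ _ (hmem _ has) _ (hmem _ hbt)).trans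
        (mul_le_mul_of_nonneg_left (hgraphdiff _ has _ hbt) hε.le)
    have hst : (Real.exp (χ/2) - ε*(L+1)) * |T s - T t| ≤ |s - t| := by
      have h := hexp _ has _ hbt; rwa [hγa, hγb] at h
    have hup : |(A * F (T s) + h₁ (F (T s), T s)) - (A * F (T t) + h₁ (F (T t), T t))|
        ≤ (Real.exp (-(χ/2)) * L + ε*(L+1)) * |T s - T t| := by
      have e1 : (A * F (T s) + h₁ (F (T s), T s)) - (A * F (T t) + h₁ (F (T t), T t))
          = A*(F (T s) - F (T t)) + (h₁ (F (T s), T s) - h₁ (F (T t), T t)) := by ring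
      rw [e1]
      refine (abs_add_le _ _).trans ?_
      rw [abs_mul]
      have hAle : |A| * |F (T s) - F (T t)| ≤ Real.exp (-(χ/2)) * (L * |T s - T t|) :=
        mul_le_mul hA hFd (abs_nonneg _) (Real.exp_nonneg _)
      nlinarith
    show |(A * F (T s) + h₁ (F (T s), T s)) - (A * F (T t) + h₁ (F (T t), T t))| ≤ L * |s - t|
    nlinarith [mul_le_mul_of_nonneg_left hst hL.le, abs_nonneg (T s - T t)]
  · -- graph condition
    intro τ hτ
    obtain ⟨hmem', heq⟩ := hT τ hτ
    exact ⟨T τ, hmem', by rw [Prod.mk.injEq]; exact ⟨rfl, heq.symm⟩⟩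
  · -- contraction of the base point
    have h0mem : (0:ℝ) ∈ Set.Icc (-r) r := by constructor <;> linarith
    obtain ⟨ht₀, hγ0⟩ := hT 0 h0mem
    have h0q' : (0:ℝ) ∈ Set.Icc (-q') q' := by constructor <;> linarith
    have hz₀ : ((F (T 0), T 0) : ℝ × ℝ) ∈ S := hmem _ ht₀
    have hz0sub : ((F (T 0), T 0) : ℝ × ℝ) - (0, 0) = (F (T 0), T 0) := by simp
    have hh₂ : |h₂ (F (T 0), T 0)| ≤ ε * max |F (T 0)| |T 0| := by
      have h := hlip₂ _ hz₀ _ h00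
      rwa [h₂0, sub_zero, hz0sub, hnorm] at h
    have hh₁ : |h₁ (F (T 0), T 0)| ≤ ε * max |F (T 0)| |T 0| := by
      have h := hlip₁ _ hz₀ _ h00
      rwa [h₁0, sub_zero, hz0sub, hnorm] at h
    have hBt : Real.exp (χ/2) * |T 0| ≤ |h₂ (F (T 0), T 0)| := by
      have he : B * T 0 = -(h₂ (F (T 0), T 0)) := by linarith
      calc Real.exp (χ/2) * |T 0| ≤ |B| * |T 0| :=
            mul_le_mul_of_nonneg_right hB (abs_nonneg _)
        _ = |B * T 0| := (abs_mul _ _).symm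
        _ = |h₂ (F (T 0), T 0)| := by rw [he, abs_neg]
    have hE1 : (1:ℝ) ≤ Real.exp (χ/2) := Real.one_le_exp (by linarith)
    have hmax : max |F (T 0)| |T 0| ≤ |F (T 0)| + |T 0| :=
      max_le (by linarith [abs_nonneg (T 0)]) (by linarith [abs_nonneg (F (T 0))])
    have ht₀small : |T 0| ≤ 2*ε*|F (T 0)| := by
      nlinarith [abs_nonneg (T 0), abs_nonneg (F (T 0)),
        mul_le_mul_of_nonneg_left hmax hε.le]
    have hFt₀ : (1 - 2*L*ε)*|F (T 0)| ≤ |F 0| := by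
      have hd := hF _ ht₀ 0 h0q'
      have habs : |F (T 0)| - |F 0| ≤ L * |T 0| := by
        have h' := abs_sub_abs_le_abs_sub (F (T 0)) (F 0)
        have h'' : |T 0 - 0| = |T 0| := by rw [sub_zero]
        rw [h''] at hd
        linarith
      nlinarith [abs_nonneg (F (T 0))]
    show |A * F (T 0) + h₁ (F (T 0), T 0)| ≤ Real.exp (-(χ/4)) * |F 0|
    have hGb : |A * F (T 0) + h₁ (F (T 0), T 0)|
        ≤ Real.exp (-(χ/2)) * |F (T 0)| + ε*(|F (T 0)| + |T 0|) := by
      refine (abs_add_le _ _).trans ?_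
      rw [abs_mul]
      have hAle : |A| * |F (T 0)| ≤ Real.exp (-(χ/2)) * |F (T 0)| :=
        mul_le_mul_of_nonneg_right hA (abs_nonneg _)
      nlinarith [mul_le_mul_of_nonneg_left hmax hε.le]
    have hEχ4 : Real.exp (-(χ/4)) ≤ 1 := by
      rw [show (1:ℝ) = Real.exp 0 from (Real.exp_zero).symm]
      exact Real.exp_le_exp.mpr (by linarith)
    have s1 : |A * F (T 0) + h₁ (F (T 0), T 0)| ≤ (Real.exp (-(χ/2)) + 2*ε) * |F (T 0)| := by
      have u1 : ε * |T 0| ≤ ε * (2*ε*|F (T 0)|) :=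
        mul_le_mul_of_nonneg_left ht₀small hε.le
      have u2 : (2*ε) * (ε*|F (T 0)|) ≤ 1 * (ε*|F (T 0)|) :=
        mul_le_mul_of_nonneg_right (by linarith) (mul_nonneg hε.le (abs_nonneg _))
      ring_nf at u1 u2 hGb ⊢
      linarith [hGb, u1, u2]
    have s2 : (Real.exp (-(χ/2)) + 2*ε) * |F (T 0)| ≤ Real.exp (-(χ/4)) * |F 0| := by
      have t1 := mul_le_mul_of_nonneg_left hFt₀ (Real.exp_nonneg (-(χ/4)))
      have t2 : (0:ℝ) ≤ (Real.exp (-(χ/4)) - Real.exp (-(χ/2)) - ε*(2*(1+L))) * |F (T 0)| :=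
        mul_nonneg (by linarith) (abs_nonneg _)
      have t3 : (0:ℝ) ≤ (1 - Real.exp (-(χ/4))) * (2*(L*ε)*|F (T 0)|) :=
        mul_nonneg (by linarith)
          (mul_nonneg (mul_nonneg (by norm_num) (mul_nonneg hL.le hε.le)) (abs_nonneg _))
      ring_nf at t1 t2 t3 ⊢
      linarith [t1, t2, t3]
    linarith
end

section
/- Let χ > 0 and L > 0. There exists ε₀ > 0, depending only on χ and L, with the following property for every ε ∈ (0, ε₀). Let q > 0 and q′ with 10⁻²·q ≤ q′ ≤ q, let A, B ∈ ℝ with |A| ≤ exp(−χ/2) and |B| ≥ exp(χ/2), and let h₁, h₂ : [−q, q]² → ℝ be C¹ functions with h₁(0,0) = h₂(0,0) = 0 and with the operator norm of the derivative of h_i at every point of [−q, q]² at most ε (i = 1, 2). Define f : [−q, q]² → ℝ² by f(u, v) = (A·u + h₁(u, v), B·v + h₂(u, v)). Let F₁, F₂ : [−q′, q′] → ℝ be L-Lipschitz with sup_{|t| ≤ q′} |F_i(t)| ≤ q, set J = [−q′·exp(χ/2 − √ε), q′·exp(χ/2 − √ε)], and suppose G₁, G₂ : J → ℝ are functions such that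 {(G_i(τ), τ) : τ ∈ J} ⊆ f({(F_i(t), t) : |t| ≤ q′}) for i = 1, 2. Then sup_{τ ∈ J} |G₁(τ) − G₂(τ)| ≤ exp(−χ/4) · sup_{|t| ≤ q′} |F₁(t) − F₂(t)|. -/
set_option maxHeartbeats 1000000


/-- The graph transform is a contraction: the C⁰ distance between the
transformed graphs shrinks by the factor `exp (-χ/4)`. -/
theorem statement4 (χ L : ℝ) (hχ : 0 < χ) (hL : 0 < L) :
    ∃ ε₀ : ℝ, 0 < ε₀ ∧
      ∀ ε : ℝ, 0 < ε → ε < ε₀ →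
      ∀ q q' : ℝ, 0 < q → q / 100 ≤ q' → q' ≤ q →
      ∀ A B : ℝ, |A| ≤ Real.exp (-(χ / 2)) → Real.exp (χ / 2) ≤ |B| →
      ∀ h₁ h₂ : ℝ × ℝ → ℝ, ∀ D₁ D₂ : ℝ × ℝ → (ℝ × ℝ) →L[ℝ] ℝ,
        h₁ (0, 0) = 0 → h₂ (0, 0) = 0 →
        (∀ z ∈ Set.Icc (-q) q ×ˢ Set.Icc (-q) q,
          HasFDerivWithinAt h₁ (D₁ z) (Set.Icc (-q) q ×ˢ Set.Icc (-q) q) z) →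
        (∀ z ∈ Set.Icc (-q) q ×ˢ Set.Icc (-q) q,
          HasFDerivWithinAt h₂ (D₂ z) (Set.Icc (-q) q ×ˢ Set.Icc (-q) q) z) →
        ContinuousOn D₁ (Set.Icc (-q) q ×ˢ Set.Icc (-q) q) →
        ContinuousOn D₂ (Set.Icc (-q) q ×ˢ Set.Icc (-q) q) →
        (∀ z ∈ Set.Icc (-q) q ×ˢ Set.Icc (-q) q, ‖D₁ z‖ ≤ ε) →
        (∀ z ∈ Set.Icc (-q) q ×ˢ Set.Icc (-q) q, ‖D₂ z‖ ≤ ε) →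
      ∀ F₁ F₂ : ℝ → ℝ,
        (∀ s ∈ Set.Icc (-q') q', ∀ t ∈ Set.Icc (-q') q',
          |F₁ s - F₁ t| ≤ L * |s - t|) →
        (∀ s ∈ Set.Icc (-q') q', ∀ t ∈ Set.Icc (-q') q',
          |F₂ s - F₂ t| ≤ L * |s - t|) →
        (∀ t ∈ Set.Icc (-q') q', |F₁ t| ≤ q) →
        (∀ t ∈ Set.Icc (-q') q', |F₂ t| ≤ q) →
      ∀ J : Set ℝ,
        J = Set.Icc (-(q' * Real.exp (χ / 2 - Real.sqrt ε)))
          (q' * Real.exp (χ / 2 - Real.sqrt ε)) →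
      ∀ G₁ G₂ : ℝ → ℝ,
        (∀ τ ∈ J, ∃ t ∈ Set.Icc (-q') q',
          (G₁ τ, τ) = (A * F₁ t + h₁ (F₁ t, t), B * t + h₂ (F₁ t, t))) →
        (∀ τ ∈ J, ∃ t ∈ Set.Icc (-q') q',
          (G₂ τ, τ) = (A * F₂ t + h₁ (F₂ t, t), B * t + h₂ (F₂ t, t))) →
        ∀ τ ∈ J, |G₁ τ - G₂ τ| ≤
          Real.exp (-(χ / 4)) *
            sSup {d : ℝ | ∃ t ∈ Set.Icc (-q') q', d = |F₁ t - F₂ t|} := by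

  set a := Real.exp (-(χ / 2)) with ha
  set m := Real.exp (-(χ / 4)) with hm
  set c := Real.exp (χ / 2) with hc
  have ham : a < m := Real.exp_lt_exp.2 (by linarith)
  have hc1 : 1 < c := by
    calc (1:ℝ) = Real.exp 0 := Real.exp_zero.symm
      _ < c := Real.exp_lt_exp.2 (by linarith)
  have ha0 : 0 < a := Real.exp_pos _
  have ha1 : a ≤ 1 := Real.exp_le_one_iff.2 (by linarith)
  refine ⟨min (min ((m - a)/(2*L+3)) ((c - 1)/(2*(L+1)))) 1, ?_, ?_⟩
  · apply lt_min (lt_min _ _) one_pos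
    · apply div_pos (by linarith) (by linarith)
    · apply div_pos (by linarith) (by linarith)
  intro ε hε hεlt q q' hq hq'1 hq'2 A B hA hB h₁ h₂ D₁ D₂ hh10 hh20 hD₁ hD₂ _ _ hD₁ε hD₂ε
  intro F₁ F₂ hF₁L hF₂L hF₁q hF₂q J hJ G₁ G₂ hG₁ hG₂ τ hτ
  have hε1 : ε ≤ 1 := le_of_lt (lt_of_lt_of_le hεlt (min_le_right _ _))
  have hε2 : ε * (2*L+3) ≤ m - a := by
    have h := lt_of_lt_of_le hεlt (le_trans (min_le_left _ _) (min_le_left _ _))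
    rw [lt_div_iff₀ (show (0:ℝ) < 2*L+3 by linarith)] at h
    linarith
  have hε3 : ε * (L+1) ≤ (c - 1)/2 := by
    have h := lt_of_lt_of_le hεlt (le_trans (min_le_left _ _) (min_le_right _ _))
    rw [lt_div_iff₀ (show (0:ℝ) < 2*(L+1) by linarith)] at h
    linarith
  set K := Set.Icc (-q) q ×ˢ Set.Icc (-q) q with hK
  have hKconv : Convex ℝ K := (convex_Icc _ _).prod (convex_Icc _ _)
  have hq'0 : 0 < q' := lt_of_lt_of_le (by linarith) hq'1
  have h0mem : (0:ℝ) ∈ Set.Icc (-q') q' := by constructor <;> linarith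
  set Sset := {d : ℝ | ∃ t ∈ Set.Icc (-q') q', d = |F₁ t - F₂ t|} with hSset
  set S := sSup Sset with hS
  have hbdd : BddAbove Sset := by
    refine ⟨2*q, ?_⟩
    rintro d ⟨t, ht, rfl⟩
    have h1 := abs_le.1 (hF₁q t ht)
    have h2 := abs_le.1 (hF₂q t ht)
    exact abs_le.2 ⟨by linarith, by linarith⟩
  have hSmem : ∀ t ∈ Set.Icc (-q') q', |F₁ t - F₂ t| ≤ S :=
    fun t ht => le_csSup hbdd ⟨t, ht, rfl⟩
  have hS0 : 0 ≤ S := le_trans (abs_nonneg _) (hSmem 0 h0mem)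
  obtain ⟨t₁, ht₁, he₁⟩ := hG₁ τ hτ
  obtain ⟨t₂, ht₂, he₂⟩ := hG₂ τ hτ
  rw [Prod.mk.injEq] at he₁ he₂
  obtain ⟨hGe₁, hτ₁⟩ := he₁
  obtain ⟨hGe₂, hτ₂⟩ := he₂
  have ht₁' := Set.mem_Icc.1 ht₁
  have ht₂' := Set.mem_Icc.1 ht₂
  have hp₁ : ((F₁ t₁, t₁) : ℝ × ℝ) ∈ K := by
    have := abs_le.1 (hF₁q t₁ ht₁)
    exact Set.mem_prod.2 ⟨Set.mem_Icc.2 ⟨this.1, this.2⟩, Set.mem_Icc.2 ⟨by linarith [ht₁'.1], by linarith [ht₁'.2]⟩⟩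
  have hp₂ : ((F₂ t₂, t₂) : ℝ × ℝ) ∈ K := by
    have := abs_le.1 (hF₂q t₂ ht₂)
    exact Set.mem_prod.2 ⟨Set.mem_Icc.2 ⟨this.1, this.2⟩, Set.mem_Icc.2 ⟨by linarith [ht₂'.1], by linarith [ht₂'.2]⟩⟩
  have hnorm : ‖((F₂ t₂, t₂) : ℝ × ℝ) - (F₁ t₁, t₁)‖ = max |F₂ t₂ - F₁ t₁| |t₂ - t₁| := by
    simp [Prod.norm_def, Real.norm_eq_abs, Prod.fst_sub, Prod.snd_sub]
  have hkey : |F₁ t₁ - F₂ t₂| ≤ L * |t₁ - t₂| + S := by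
    calc |F₁ t₁ - F₂ t₂| ≤ |F₁ t₁ - F₁ t₂| + |F₁ t₂ - F₂ t₂| := abs_sub_le _ _ _
      _ ≤ L * |t₁ - t₂| + S := add_le_add (hF₁L t₁ ht₁ t₂ ht₂) (hSmem t₂ ht₂)
  have habs : (0:ℝ) ≤ |t₁ - t₂| := abs_nonneg _
  have hmax : max |F₂ t₂ - F₁ t₁| |t₂ - t₁| ≤ (L+1) * |t₁ - t₂| + S := by
    rw [abs_sub_comm (F₂ t₂), abs_sub_comm t₂]
    exact max_le (by nlinarith) (by nlinarith)
  -- bound on |t₁ - t₂|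
  have hmvt₂ : ‖h₂ (F₂ t₂, t₂) - h₂ (F₁ t₁, t₁)‖ ≤ ε * ‖((F₂ t₂, t₂) : ℝ × ℝ) - (F₁ t₁, t₁)‖ :=
    hKconv.norm_image_sub_le_of_norm_hasFDerivWithin_le hD₂ hD₂ε hp₁ hp₂
  have hBt : B * t₁ - B * t₂ = h₂ (F₂ t₂, t₂) - h₂ (F₁ t₁, t₁) := by linarith
  have hBabs : c * |t₁ - t₂| ≤ ε * ((L+1) * |t₁ - t₂| + S) := by
    have h1 : |B| * |t₁ - t₂| = |h₂ (F₂ t₂, t₂) - h₂ (F₁ t₁, t₁)| := by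
      rw [← abs_mul, mul_sub, hBt]
    have h2 : |h₂ (F₂ t₂, t₂) - h₂ (F₁ t₁, t₁)| ≤ ε * ((L+1) * |t₁ - t₂| + S) := by
      rw [← Real.norm_eq_abs]
      calc ‖h₂ (F₂ t₂, t₂) - h₂ (F₁ t₁, t₁)‖ ≤ ε * ‖((F₂ t₂, t₂) : ℝ × ℝ) - (F₁ t₁, t₁)‖ := hmvt₂
        _ ≤ ε * ((L+1) * |t₁ - t₂| + S) := by
            rw [hnorm]; exact mul_le_mul_of_nonneg_left hmax (le_of_lt hε)
    nlinarith [mul_le_mul_of_nonneg_right hB habs]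
  have htbound : |t₁ - t₂| ≤ ε * S := by nlinarith
  -- bound on G difference
  have hmvt₁ : ‖h₁ (F₂ t₂, t₂) - h₁ (F₁ t₁, t₁)‖ ≤ ε * ‖((F₂ t₂, t₂) : ℝ × ℝ) - (F₁ t₁, t₁)‖ :=
    hKconv.norm_image_sub_le_of_norm_hasFDerivWithin_le hD₁ hD₁ε hp₁ hp₂
  have hh₁ : |h₁ (F₁ t₁, t₁) - h₁ (F₂ t₂, t₂)| ≤ ε * ((L+1) * |t₁ - t₂| + S) := by
    rw [abs_sub_comm, ← Real.norm_eq_abs]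
    calc ‖h₁ (F₂ t₂, t₂) - h₁ (F₁ t₁, t₁)‖ ≤ ε * ‖((F₂ t₂, t₂) : ℝ × ℝ) - (F₁ t₁, t₁)‖ := hmvt₁
      _ ≤ ε * ((L+1) * |t₁ - t₂| + S) := by
          rw [hnorm]; exact mul_le_mul_of_nonneg_left hmax (le_of_lt hε)
  have hGdiff : G₁ τ - G₂ τ = A * (F₁ t₁ - F₂ t₂) + (h₁ (F₁ t₁, t₁) - h₁ (F₂ t₂, t₂)) := by
    rw [hGe₁, hGe₂]; ring
  have hGbound : |G₁ τ - G₂ τ| ≤ (a + ε) * ((L+1) * |t₁ - t₂| + S) := by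
    rw [hGdiff]
    calc |A * (F₁ t₁ - F₂ t₂) + (h₁ (F₁ t₁, t₁) - h₁ (F₂ t₂, t₂))|
        ≤ |A * (F₁ t₁ - F₂ t₂)| + |h₁ (F₁ t₁, t₁) - h₁ (F₂ t₂, t₂)| := abs_add_le _ _
      _ ≤ a * ((L+1) * |t₁ - t₂| + S) + ε * ((L+1) * |t₁ - t₂| + S) := by
          refine add_le_add ?_ hh₁
          rw [abs_mul]
          have h1 : |A| * |F₁ t₁ - F₂ t₂| ≤ a * (L * |t₁ - t₂| + S) :=
            mul_le_mul hA hkey (abs_nonneg _) (le_of_lt ha0)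
          nlinarith
      _ = (a + ε) * ((L+1) * |t₁ - t₂| + S) := by ring
  have hfin : (a + ε) * ((L+1) * (ε * S) + S) ≤ m * S := by
    nlinarith [mul_nonneg (mul_nonneg (sub_nonneg.2 ha1) hε.le) hS0,
      mul_nonneg (mul_nonneg (sub_nonneg.2 hε1) hε.le) hS0,
      mul_nonneg (sub_nonneg.2 hε2) hS0, hL.le, hS0, hε.le]
  calc |G₁ τ - G₂ τ| ≤ (a + ε) * ((L+1) * |t₁ - t₂| + S) := hGbound
    _ ≤ (a + ε) * ((L+1) * (ε * S) + S) := by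
        have h := mul_le_mul_of_nonneg_left htbound (show (0:ℝ) ≤ L+1 by linarith)
        have : (L+1) * |t₁ - t₂| + S ≤ (L+1) * (ε * S) + S := by linarith
        exact mul_le_mul_of_nonneg_left this (by positivity)
    _ ≤ m * S := hfin
end

section
/- For every γ ∈ (0, 1] there exists ε₀ > 0, depending only on γ, with the following property for every ε ∈ (0, ε₀). Let q > 0, let F : [−q, q] → ℝ be γ-Lipschitz with sup_{|t| ≤ q} |F(t)| ≤ q, and let Φ : [−q, q]² → ℝ² be a C¹ map such that at every point z of [−q, q]² one has ‖Φ(z) − z‖ ≤ ε²·q and the operator norm of D_zΦ − Id is at most ε². Then there exists a function G : [−exp(−4ε)·q, exp(−4ε)·q] → ℝ with Lipschitz constant at most exp(2ε)·γ such that Φ({(t, F(t)) : |t| ≤ q}) ∩ ([−exp(−4ε)·q, exp(−4ε)·q] × ℝ) = {(s, G(s)) : |s| ≤ exp(−4ε)·q}. -/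
/-- The image of a Lipschitz horizontal graph under a C¹-small perturbation of
the identity is again a Lipschitz horizontal graph over a slightly smaller
interval, with Lipschitz constant multiplied by at most `exp (2ε)`. -/
theorem statement5 (γ : ℝ) (hγ0 : 0 < γ) (hγ1 : γ ≤ 1) :
    ∃ ε₀ : ℝ, 0 < ε₀ ∧
      ∀ ε : ℝ, 0 < ε → ε < ε₀ →
      ∀ q : ℝ, 0 < q →
      ∀ F : ℝ → ℝ,
        (∀ s ∈ Set.Icc (-q) q, ∀ t ∈ Set.Icc (-q) q, |F s - F t| ≤ γ * |s - t|) →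
        (∀ t ∈ Set.Icc (-q) q, |F t| ≤ q) →
      ∀ Φ : ℝ × ℝ → ℝ × ℝ, ∀ DΦ : ℝ × ℝ → (ℝ × ℝ) →L[ℝ] (ℝ × ℝ),
        (∀ z ∈ Set.Icc (-q) q ×ˢ Set.Icc (-q) q,
          HasFDerivWithinAt Φ (DΦ z) (Set.Icc (-q) q ×ˢ Set.Icc (-q) q) z) →
        ContinuousOn DΦ (Set.Icc (-q) q ×ˢ Set.Icc (-q) q) →
        (∀ z ∈ Set.Icc (-q) q ×ˢ Set.Icc (-q) q, ‖Φ z - z‖ ≤ ε ^ 2 * q) →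
        (∀ z ∈ Set.Icc (-q) q ×ˢ Set.Icc (-q) q,
          ‖DΦ z - ContinuousLinearMap.id ℝ (ℝ × ℝ)‖ ≤ ε ^ 2) →
        ∃ G : ℝ → ℝ,
          (∀ s₁ ∈ Set.Icc (-(Real.exp (-(4 * ε)) * q)) (Real.exp (-(4 * ε)) * q),
            ∀ s₂ ∈ Set.Icc (-(Real.exp (-(4 * ε)) * q)) (Real.exp (-(4 * ε)) * q),
            |G s₁ - G s₂| ≤ Real.exp (2 * ε) * γ * |s₁ - s₂|) ∧
          (Φ '' {p : ℝ × ℝ | ∃ t ∈ Set.Icc (-q) q, p = (t, F t)}) ∩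
              (Set.Icc (-(Real.exp (-(4 * ε)) * q)) (Real.exp (-(4 * ε)) * q) ×ˢ
                (Set.univ : Set ℝ)) =
            {p : ℝ × ℝ | ∃ s ∈ Set.Icc (-(Real.exp (-(4 * ε)) * q))
              (Real.exp (-(4 * ε)) * q), p = (s, G s)} := by
  refine ⟨min γ (1/3), lt_min hγ0 (by norm_num), ?_⟩
  intro ε hε hεlt q hq F hF hFq Φ DΦ hderiv hDcont hclose hDclose
  have hεγ : ε < γ := hεlt.trans_le (min_le_left _ _)
  have hε3 : ε < 1/3 := hεlt.trans_le (min_le_right _ _)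
  have hε2 : ε ^ 2 < 1 := by nlinarith
  set I : Set ℝ := Set.Icc (-q) q with hI
  set K : Set (ℝ × ℝ) := I ×ˢ I with hK
  have hKconv : Convex ℝ K := (convex_Icc _ _).prod (convex_Icc _ _)
  set c : ℝ := Real.exp (-(4 * ε)) * q with hc
  have hcq : c ≤ (1 - ε ^ 2) * q := by
    have h1 : Real.exp (-(4 * ε)) ≤ 1 - ε ^ 2 := by
      have h2 : 1 + 4 * ε ≤ Real.exp (4 * ε) := by
        have := Real.add_one_le_exp (4 * ε); linarith
      have h3 : Real.exp (-(4 * ε)) = (Real.exp (4 * ε))⁻¹ := Real.exp_neg _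
      rw [h3]
      have h4 : (Real.exp (4 * ε))⁻¹ ≤ (1 + 4 * ε)⁻¹ := by
        apply inv_anti₀ (by linarith) h2
      refine h4.trans ?_
      rw [inv_le_iff_one_le_mul₀ (by linarith)]
      nlinarith
    nlinarith [Real.exp_pos (-(4 * ε))]
  have hc0 : 0 < c := mul_pos (Real.exp_pos _) hq
  -- the graph map
  set z : ℝ → ℝ × ℝ := fun t => (t, F t) with hz
  have hzK : ∀ t ∈ I, z t ∈ K := by
    intro t ht
    refine ⟨ht, ?_⟩
    have := hFq t ht
    exact abs_le.1 this
  set φ : ℝ → ℝ := fun t => (Φ (z t)).1 with hφ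
  set ψ : ℝ → ℝ := fun t => (Φ (z t)).2 with hψ
  -- mean value estimate
  have key : ∀ w₁ ∈ K, ∀ w₂ ∈ K, ‖Φ w₁ - Φ w₂ - (w₁ - w₂)‖ ≤ ε ^ 2 * ‖w₁ - w₂‖ := by
    intro w₁ h₁ w₂ h₂
    have := hKconv.norm_image_sub_le_of_norm_hasFDerivWithin_le'
      (f := Φ) (f' := DΦ) (φ := ContinuousLinearMap.id ℝ (ℝ × ℝ)) (C := ε ^ 2)
      hderiv hDclose h₂ h₁
    simpa using this
  have hznorm : ∀ t₁ ∈ I, ∀ t₂ ∈ I, ‖z t₁ - z t₂‖ ≤ |t₁ - t₂| := by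
    intro t₁ h₁ t₂ h₂
    have : z t₁ - z t₂ = (t₁ - t₂, F t₁ - F t₂) := rfl
    rw [this, Prod.norm_def]
    simp only [Real.norm_eq_abs]
    refine max_le le_rfl ?_
    calc |F t₁ - F t₂| ≤ γ * |t₁ - t₂| := hF t₁ h₁ t₂ h₂
      _ ≤ 1 * |t₁ - t₂| := by gcongr
      _ = |t₁ - t₂| := one_mul _
  have keyz : ∀ t₁ ∈ I, ∀ t₂ ∈ I,
      ‖Φ (z t₁) - Φ (z t₂) - (z t₁ - z t₂)‖ ≤ ε ^ 2 * |t₁ - t₂| := by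
    intro t₁ h₁ t₂ h₂
    calc ‖Φ (z t₁) - Φ (z t₂) - (z t₁ - z t₂)‖ ≤ ε ^ 2 * ‖z t₁ - z t₂‖ :=
          key _ (hzK t₁ h₁) _ (hzK t₂ h₂)
      _ ≤ ε ^ 2 * |t₁ - t₂| := by
          have := hznorm t₁ h₁ t₂ h₂; nlinarith [sq_nonneg ε]
  have hφest : ∀ t₁ ∈ I, ∀ t₂ ∈ I, |φ t₁ - φ t₂ - (t₁ - t₂)| ≤ ε ^ 2 * |t₁ - t₂| := by
    intro t₁ h₁ t₂ h₂
    have h := keyz t₁ h₁ t₂ h₂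
    have h1 := norm_fst_le (Φ (z t₁) - Φ (z t₂) - (z t₁ - z t₂))
    have h2 : (Φ (z t₁) - Φ (z t₂) - (z t₁ - z t₂)).1 = φ t₁ - φ t₂ - (t₁ - t₂) := rfl
    rw [h2, Real.norm_eq_abs] at h1
    linarith
  have hψest : ∀ t₁ ∈ I, ∀ t₂ ∈ I, |ψ t₁ - ψ t₂ - (F t₁ - F t₂)| ≤ ε ^ 2 * |t₁ - t₂| := by
    intro t₁ h₁ t₂ h₂
    have h := keyz t₁ h₁ t₂ h₂
    have h1 := norm_snd_le (Φ (z t₁) - Φ (z t₂) - (z t₁ - z t₂))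
    have h2 : (Φ (z t₁) - Φ (z t₂) - (z t₁ - z t₂)).2 = ψ t₁ - ψ t₂ - (F t₁ - F t₂) := rfl
    rw [h2, Real.norm_eq_abs] at h1
    linarith
  -- lower bound on φ increments
  have hφlow : ∀ t₁ ∈ I, ∀ t₂ ∈ I, (1 - ε ^ 2) * |t₁ - t₂| ≤ |φ t₁ - φ t₂| := by
    intro t₁ h₁ t₂ h₂
    have h := hφest t₁ h₁ t₂ h₂
    have := abs_sub_abs_le_abs_sub (t₁ - t₂) (t₁ - t₂ - (φ t₁ - φ t₂))
    have h3 : |t₁ - t₂ - (φ t₁ - φ t₂)| = |φ t₁ - φ t₂ - (t₁ - t₂)| := abs_sub_comm _ _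
    have h4 : t₁ - t₂ - (t₁ - t₂ - (φ t₁ - φ t₂)) = φ t₁ - φ t₂ := by ring
    rw [h3, h4] at this
    linarith
  have hφmono : ∀ t₁ ∈ I, ∀ t₂ ∈ I, t₂ < t₁ → φ t₂ < φ t₁ := by
    intro t₁ h₁ t₂ h₂ hlt
    have h := hφest t₁ h₁ t₂ h₂
    rw [abs_le] at h
    have habs : |t₁ - t₂| = t₁ - t₂ := abs_of_pos (by linarith)
    rw [habs] at h
    nlinarith
  have hφinj : ∀ t₁ ∈ I, ∀ t₂ ∈ I, φ t₁ = φ t₂ → t₁ = t₂ := by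
    intro t₁ h₁ t₂ h₂ heq
    rcases lt_trichotomy t₁ t₂ with h | h | h
    · exact absurd heq (ne_of_lt (hφmono t₂ h₂ t₁ h₁ h))
    · exact h
    · exact absurd heq (ne_of_lt (hφmono t₁ h₁ t₂ h₂ h)).symm
  -- continuity of φ
  have hΦcont : ContinuousOn Φ K := fun w hw => (hderiv w hw).continuousWithinAt
  have hFcont : ContinuousOn F I := by
    have : LipschitzOnWith (Real.toNNReal γ) F I := by
      apply LipschitzOnWith.of_dist_le_mul
      intro x hx y hy
      rw [Real.dist_eq, Real.dist_eq, Real.coe_toNNReal γ hγ0.le]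
      exact hF x hx y hy
    exact this.continuousOn
  have hzcont : ContinuousOn z I := continuousOn_id.prodMk hFcont
  have hφcont : ContinuousOn φ I := by
    have : ContinuousOn (Φ ∘ z) I := hΦcont.comp hzcont hzK
    exact (continuous_fst.comp_continuousOn this)
  -- boundary values
  have hqI : q ∈ I := by constructor <;> [linarith; linarith]
  have hmqI : -q ∈ I := by constructor <;> [linarith; linarith]
  have hφq : c ≤ φ q := by
    have h := hclose (z q) (hzK q hqI)
    have h1 := norm_fst_le (Φ (z q) - z q)
    have h2 : (Φ (z q) - z q).1 = φ q - q := rfl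
    rw [h2, Real.norm_eq_abs] at h1
    have := abs_le.1 (h1.trans h)
    calc c ≤ (1 - ε ^ 2) * q := hcq
      _ ≤ φ q := by linarith [this.1]
  have hφmq : φ (-q) ≤ -c := by
    have h := hclose (z (-q)) (hzK (-q) hmqI)
    have h1 := norm_fst_le (Φ (z (-q)) - z (-q))
    have h2 : (Φ (z (-q)) - z (-q)).1 = φ (-q) - (-q) := rfl
    rw [h2, Real.norm_eq_abs] at h1
    have := abs_le.1 (h1.trans h)
    have h3 : (1 - ε ^ 2) * q ≤ q - (φ (-q) - (-q)) - 0 := by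
      have := this.2; nlinarith
    nlinarith [hcq]
  -- surjectivity via IVT
  have hsurj : ∀ s ∈ Set.Icc (-c) c, ∃ t ∈ I, φ t = s := by
    intro s hs
    have hsub : Set.Icc (φ (-q)) (φ q) ⊆ φ '' I := by
      have := intermediate_value_Icc (by linarith : -q ≤ q) hφcont
      exact this
    have hsIcc : s ∈ Set.Icc (φ (-q)) (φ q) :=
      ⟨le_trans hφmq hs.1, le_trans hs.2 hφq⟩
    obtain ⟨t, ht, hφt⟩ := hsub hsIcc
    exact ⟨t, ht, hφt⟩
  have main : ∀ t₁ ∈ I, ∀ t₂ ∈ I,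
      |ψ t₁ - ψ t₂| ≤ Real.exp (2 * ε) * γ * |φ t₁ - φ t₂| := by
    intro t₁ ht₁ t₂ ht₂
    have hψb : |ψ t₁ - ψ t₂| ≤ (γ + ε ^ 2) * |t₁ - t₂| := by
      have h := hψest t₁ ht₁ t₂ ht₂
      have h2 := hF t₁ ht₁ t₂ ht₂
      have h3 := abs_sub_abs_le_abs_sub (ψ t₁ - ψ t₂) (ψ t₁ - ψ t₂ - (F t₁ - F t₂))
      have h4 : ψ t₁ - ψ t₂ - (ψ t₁ - ψ t₂ - (F t₁ - F t₂)) = F t₁ - F t₂ := by ring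
      rw [h4] at h3
      nlinarith
    have hφb : (1 - ε ^ 2) * |t₁ - t₂| ≤ |φ t₁ - φ t₂| := hφlow t₁ ht₁ t₂ ht₂
    have hexp : (γ + ε ^ 2) ≤ Real.exp (2 * ε) * γ * (1 - ε ^ 2) := by
      have h2 : 1 + 2 * ε ≤ Real.exp (2 * ε) := by
        have := Real.add_one_le_exp (2 * ε); linarith
      have hA : ε ^ 2 < γ * ε := by rw [pow_two]; exact mul_lt_mul_of_pos_right hεγ hε
      have hB : (0:ℝ) ≤ γ * ε * (1 - ε - 2 * ε ^ 2) := by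
        have h5 : (0:ℝ) < 1 - ε - 2 * ε ^ 2 := by nlinarith
        positivity
      have hC : γ + ε ^ 2 ≤ (1 + 2 * ε) * γ * (1 - ε ^ 2) := by nlinarith
      have hD : (1 + 2 * ε) * γ * (1 - ε ^ 2) ≤ Real.exp (2 * ε) * γ * (1 - ε ^ 2) := by
        have h6 : (0:ℝ) ≤ γ * (1 - ε ^ 2) := by nlinarith
        calc (1 + 2 * ε) * γ * (1 - ε ^ 2) = (1 + 2 * ε) * (γ * (1 - ε ^ 2)) := by ring
          _ ≤ Real.exp (2 * ε) * (γ * (1 - ε ^ 2)) := mul_le_mul_of_nonneg_right h2 h6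
          _ = Real.exp (2 * ε) * γ * (1 - ε ^ 2) := by ring
      linarith
    have habs : (0:ℝ) ≤ |t₁ - t₂| := abs_nonneg _
    calc |ψ t₁ - ψ t₂| ≤ (γ + ε ^ 2) * |t₁ - t₂| := hψb
      _ ≤ Real.exp (2 * ε) * γ * (1 - ε ^ 2) * |t₁ - t₂| :=
          mul_le_mul_of_nonneg_right hexp habs
      _ = Real.exp (2 * ε) * γ * ((1 - ε ^ 2) * |t₁ - t₂|) := by ring
      _ ≤ Real.exp (2 * ε) * γ * |φ t₁ - φ t₂| :=
          mul_le_mul_of_nonneg_left hφb (mul_pos (Real.exp_pos _) hγ0).le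
  -- define the inverse and G
  classical
  have hsurj' : ∀ s : ℝ, ∃ t : ℝ, s ∈ Set.Icc (-c) c → t ∈ I ∧ φ t = s := by
    intro s
    by_cases h : s ∈ Set.Icc (-c) c
    · obtain ⟨t, ht, hφt⟩ := hsurj s h
      exact ⟨t, fun _ => ⟨ht, hφt⟩⟩
    · exact ⟨0, fun hs => absurd hs h⟩
  choose T hTspec using hsurj'
  refine ⟨fun s => ψ (T s), ?_, ?_⟩
  · -- Lipschitz estimate
    intro s₁ hs₁ s₂ hs₂
    obtain ⟨ht₁, hφ₁⟩ := hTspec s₁ hs₁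
    obtain ⟨ht₂, hφ₂⟩ := hTspec s₂ hs₂
    have := main (T s₁) ht₁ (T s₂) ht₂
    rw [hφ₁, hφ₂] at this
    exact this
  · -- set equality
    ext p
    constructor
    · rintro ⟨⟨w, hw, hΦw⟩, hp1, -⟩
      obtain ⟨t, ht, rfl⟩ := hw
      have hp : p = (φ t, ψ t) := by rw [← hΦw]
      have hs : φ t ∈ Set.Icc (-c) c := by
        rw [hp] at hp1; exact hp1
      refine ⟨φ t, hs, ?_⟩
      obtain ⟨hT1, hT2⟩ := hTspec (φ t) hs
      have hTt : T (φ t) = t := hφinj _ hT1 _ ht hT2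
      rw [hp]
      show (φ t, ψ t) = (φ t, ψ (T (φ t)))
      rw [hTt]
    · rintro ⟨s, hs, rfl⟩
      obtain ⟨hT1, hT2⟩ := hTspec s hs
      refine ⟨⟨z (T s), ⟨T s, hT1, rfl⟩, ?_⟩, hs, Set.mem_univ _⟩
      show Φ (z (T s)) = (s, ψ (T s))
      have h9 : Φ (z (T s)) = (φ (T s), ψ (T s)) := rfl
      rw [h9, hT2]
end

section
/- Let L_u, L_s ≥ 0 with L_u·L_s < 1, let q > 0, and let F₁, F₂ : [−q, q] → ℝ be L_u-Lipschitz functions. Let t₁, t₂ ∈ [−q, q], let J ⊆ ℝ be the closed interval with endpoints F₁(t₁) and F₂(t₂), and let G : J → ℝ be an L_s-Lipschitz function with G(F₁(t₁)) = t₁ and G(F₂(t₂)) = t₂. Set D = sup_{|t| ≤ q} |F₁(t) − F₂(t)|. Then: (1) |F₁(t₁) − F₂(t₂)| ≤ D/(1 − L_u·L_s); (2) the length (total variation with respect to the Euclidean norm on ℝ²) of the path s ↦ (s, G(s)), s ∈ J, is at most (1 + L_s)·D/(1 − L_u·L_s). -/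
lemma vec2_dist_le (a b c d : ℝ) : dist (vec2 a b) (vec2 c d) ≤ |a - c| + |b - d| := by
  have h : dist (vec2 a b) (vec2 c d) = Real.sqrt ((a - c) ^ 2 + (b - d) ^ 2) := by
    rw [EuclideanSpace.dist_eq]
    congr 1
    rw [Fin.sum_univ_two]
    simp [vec2, Real.dist_eq, sq_abs]
  rw [h]
  have h2 : (a - c) ^ 2 + (b - d) ^ 2 ≤ (|a - c| + |b - d|) ^ 2 := by
    have := abs_nonneg (a - c)
    have := abs_nonneg (b - d)
    nlinarith [sq_abs (a - c), sq_abs (b - d)]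
  calc Real.sqrt ((a - c) ^ 2 + (b - d) ^ 2) ≤ Real.sqrt ((|a - c| + |b - d|) ^ 2) :=
        Real.sqrt_le_sqrt h2
    _ = |a - c| + |b - d| := Real.sqrt_sq (by positivity)

/-- Comparison of the sup-distance between two Lipschitz vertical graphs with
the length of a transverse Lipschitz curve joining them. -/
theorem statement6 (Lu Ls q : ℝ) (hLu : 0 ≤ Lu) (hLs : 0 ≤ Ls)
    (hprod : Lu * Ls < 1) (hq : 0 < q)
    (F₁ F₂ : ℝ → ℝ)
    (hF₁ : ∀ s ∈ Set.Icc (-q) q, ∀ t ∈ Set.Icc (-q) q, |F₁ s - F₁ t| ≤ Lu * |s - t|)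
    (hF₂ : ∀ s ∈ Set.Icc (-q) q, ∀ t ∈ Set.Icc (-q) q, |F₂ s - F₂ t| ≤ Lu * |s - t|)
    (t₁ t₂ : ℝ) (ht₁ : t₁ ∈ Set.Icc (-q) q) (ht₂ : t₂ ∈ Set.Icc (-q) q)
    (G : ℝ → ℝ)
    (hG : ∀ s ∈ Set.uIcc (F₁ t₁) (F₂ t₂), ∀ s' ∈ Set.uIcc (F₁ t₁) (F₂ t₂),
      |G s - G s'| ≤ Ls * |s - s'|)
    (hGt₁ : G (F₁ t₁) = t₁) (hGt₂ : G (F₂ t₂) = t₂)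
    (D : ℝ) (hD : D = sSup {d : ℝ | ∃ t ∈ Set.Icc (-q) q, d = |F₁ t - F₂ t|}) :
    |F₁ t₁ - F₂ t₂| ≤ D / (1 - Lu * Ls) ∧
    eVariationOn (fun s : ℝ => vec2 s (G s)) (Set.uIcc (F₁ t₁) (F₂ t₂)) ≤
      ENNReal.ofReal ((1 + Ls) * D / (1 - Lu * Ls)) := by
  have hden : 0 < 1 - Lu * Ls := by linarith
  -- D is an upper bound for the set, which contains |F₁ t₂ - F₂ t₂|
  have hbdd : BddAbove {d : ℝ | ∃ t ∈ Set.Icc (-q) q, d = |F₁ t - F₂ t|} := by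
    refine ⟨|F₁ t₂ - F₂ t₂| + 4 * Lu * q, ?_⟩
    rintro d ⟨t, ht, rfl⟩
    have h1 : |F₁ t - F₁ t₂| ≤ Lu * |t - t₂| := hF₁ t ht t₂ ht₂
    have h2 : |F₂ t₂ - F₂ t| ≤ Lu * |t₂ - t| := hF₂ t₂ ht₂ t ht
    have habs : |t - t₂| ≤ 2 * q := by
      rw [abs_le]; constructor <;> [linarith [ht.1, ht₂.2]; linarith [ht.2, ht₂.1]]
    have habs' : |t₂ - t| ≤ 2 * q := by rw [abs_sub_comm]; exact habs
    have := abs_sub_abs_le_abs_sub (F₁ t - F₂ t) 0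
    calc |F₁ t - F₂ t| ≤ |F₁ t - F₁ t₂| + |F₁ t₂ - F₂ t₂| + |F₂ t₂ - F₂ t| := by
          have := abs_add_le (F₁ t - F₁ t₂) (F₁ t₂ - F₂ t₂)
          have := abs_add_le (F₁ t - F₂ t₂) (F₂ t₂ - F₂ t)
          calc |F₁ t - F₂ t| = |(F₁ t - F₂ t₂) + (F₂ t₂ - F₂ t)| := by ring_nf
            _ ≤ |F₁ t - F₂ t₂| + |F₂ t₂ - F₂ t| := abs_add_le _ _
            _ ≤ |F₁ t - F₁ t₂| + |F₁ t₂ - F₂ t₂| + |F₂ t₂ - F₂ t| := by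
                have : |F₁ t - F₂ t₂| = |(F₁ t - F₁ t₂) + (F₁ t₂ - F₂ t₂)| := by ring_nf
                rw [this]; linarith [abs_add_le (F₁ t - F₁ t₂) (F₁ t₂ - F₂ t₂)]
      _ ≤ Lu * (2 * q) + |F₁ t₂ - F₂ t₂| + Lu * (2 * q) := by
          have := mul_le_mul_of_nonneg_left habs hLu
          have := mul_le_mul_of_nonneg_left habs' hLu
          linarith
      _ ≤ |F₁ t₂ - F₂ t₂| + 4 * Lu * q := by linarith
  have hDle : |F₁ t₂ - F₂ t₂| ≤ D := by
    rw [hD]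
    exact le_csSup hbdd ⟨t₂, ht₂, rfl⟩
  have hDnn : 0 ≤ D := le_trans (abs_nonneg _) hDle
  -- key estimate
  have hkey : |F₁ t₁ - F₂ t₂| ≤ D / (1 - Lu * Ls) := by
    have ht : |t₁ - t₂| ≤ Ls * |F₁ t₁ - F₂ t₂| := by
      have := hG (F₁ t₁) Set.left_mem_uIcc (F₂ t₂) Set.right_mem_uIcc
      rwa [hGt₁, hGt₂] at this
    have h1 : |F₁ t₁ - F₁ t₂| ≤ Lu * |t₁ - t₂| := hF₁ t₁ ht₁ t₂ ht₂
    have hsum : |F₁ t₁ - F₂ t₂| ≤ Lu * Ls * |F₁ t₁ - F₂ t₂| + D := by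
      calc |F₁ t₁ - F₂ t₂| = |(F₁ t₁ - F₁ t₂) + (F₁ t₂ - F₂ t₂)| := by ring_nf
        _ ≤ |F₁ t₁ - F₁ t₂| + |F₁ t₂ - F₂ t₂| := abs_add_le _ _
        _ ≤ Lu * (Ls * |F₁ t₁ - F₂ t₂|) + D := by
            have := mul_le_mul_of_nonneg_left ht hLu
            linarith
        _ = Lu * Ls * |F₁ t₁ - F₂ t₂| + D := by ring
    rw [le_div_iff₀ hden]
    nlinarith
  refine ⟨hkey, ?_⟩
  -- Part 2
  set a := F₁ t₁
  set b := F₂ t₂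
  have hlip : LipschitzOnWith (1 + Ls).toNNReal (fun s : ℝ => vec2 s (G s)) (Set.uIcc a b) := by
    rw [lipschitzOnWith_iff_dist_le_mul]
    intro x hx y hy
    have h1 : dist (vec2 x (G x)) (vec2 y (G y)) ≤ |x - y| + |G x - G y| := vec2_dist_le _ _ _ _
    have h2 : |G x - G y| ≤ Ls * |x - y| := hG x hx y hy
    have h3 : ((1 + Ls).toNNReal : ℝ) = 1 + Ls := Real.coe_toNNReal _ (by linarith)
    rw [h3, Real.dist_eq]
    nlinarith [abs_nonneg (x - y)]
  have hcomp := hlip.comp_eVariationOn_le (g := id) (s := Set.uIcc a b) (Set.mapsTo_id _)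
  have hid : eVariationOn (id : ℝ → ℝ) (Set.uIcc a b) ≤ ENNReal.ofReal |a - b| := by
    have hm : MonotoneOn (id : ℝ → ℝ) (Set.Icc (min a b) (max a b)) := fun x _ y _ h => h
    have := hm.eVariationOn_le (Set.left_mem_Icc.2 (min_le_max))
      (Set.right_mem_Icc.2 (min_le_max))
    rw [Set.inter_self] at this
    simpa [Set.uIcc, max_sub_min_eq_abs, abs_sub_comm] using this
  calc eVariationOn (fun s : ℝ => vec2 s (G s)) (Set.uIcc a b)
      = eVariationOn ((fun s : ℝ => vec2 s (G s)) ∘ id) (Set.uIcc a b) := rfl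
    _ ≤ (1 + Ls).toNNReal * eVariationOn (id : ℝ → ℝ) (Set.uIcc a b) := hcomp
    _ ≤ (1 + Ls).toNNReal * ENNReal.ofReal |a - b| := by gcongr
    _ = ENNReal.ofReal ((1 + Ls) * |a - b|) := by
        rw [ENNReal.ofReal_mul (by linarith)]; rfl
    _ ≤ ENNReal.ofReal ((1 + Ls) * D / (1 - Lu * Ls)) := by
        apply ENNReal.ofReal_le_ofReal
        rw [mul_div_assoc]
        exact mul_le_mul_of_nonneg_left hkey (by linarith)
end

section
/- Let X be a compact metric space, let T : X → X be a homeomorphism, and let ν₀, ν₁ be T-invariant Borel probability measures on X. Assume there exist disjoint Borel sets X₀, X₁ ⊆ X with T⁻¹(X_i) = X_i and ν_i(X_i) = 1 for i = 0, 1. Let η ∈ (0, 1), let n₀, n₁ be natural numbers, and let U₀, U₁ ⊆ X be open sets with ν_i(U_i) > 1 − η for i = 0, 1. Then there exist open sets U₀′ ⊆ U₀ and U₁′ ⊆ U₁ such that: (1) ν_i(U_i′) > 1 − η and ν_i(∂U_i′) = 0 for i = 0, 1; (2) T^j(closure(U₁′)) ∩ closure(U₀′) = ∅ for every integer 0 ≤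 j ≤ n₁; (3) T^j(closure(U₀′)) ∩ closure(U₁′) = ∅ for every integer 0 ≤ j ≤ n₀; (4) ν₀(U₁′) < η and ν₁(U₀′) < η. -/
open MeasureTheory Metric Set

lemma mapsTo_iterate_of_preimage_eq {X : Type*} (T : X → X) {S : Set X}
    (h : T ⁻¹' S = S) (j : ℕ) : Set.MapsTo (T^[j]) S S := by
  have hT : Set.MapsTo T S S := fun x hx => by rw [← h] at hx; exact hx
  exact hT.iterate j

/-- Typical orbits of two mutually singular invariant measures can be separated
by open neighborhoods that remain disjoint under a prescribed number of
iterations. -/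
theorem statement11 {X : Type*} [MetricSpace X] [CompactSpace X]
    [MeasurableSpace X] [BorelSpace X]
    (T : X ≃ₜ X) (ν₀ ν₁ : Measure X)
    [IsProbabilityMeasure ν₀] [IsProbabilityMeasure ν₁]
    (hT0 : MeasurePreserving T ν₀ ν₀) (hT1 : MeasurePreserving T ν₁ ν₁)
    (X₀ X₁ : Set X) (hB0 : MeasurableSet X₀) (hB1 : MeasurableSet X₁)
    (hXdisj : Disjoint X₀ X₁)
    (hinv0 : (T : X → X) ⁻¹' X₀ = X₀) (hinv1 : (T : X → X) ⁻¹' X₁ = X₁)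
    (hfull0 : ν₀ X₀ = 1) (hfull1 : ν₁ X₁ = 1)
    (η : ℝ) (hη0 : 0 < η) (hη1 : η < 1)
    (n₀ n₁ : ℕ) (U₀ U₁ : Set X) (hU₀ : IsOpen U₀) (hU₁ : IsOpen U₁)
    (hm0 : ENNReal.ofReal (1 - η) < ν₀ U₀) (hm1 : ENNReal.ofReal (1 - η) < ν₁ U₁) :
    ∃ U₀' U₁' : Set X,
      IsOpen U₀' ∧ IsOpen U₁' ∧ U₀' ⊆ U₀ ∧ U₁' ⊆ U₁ ∧
      ENNReal.ofReal (1 - η) < ν₀ U₀' ∧ ENNReal.ofReal (1 - η) < ν₁ U₁' ∧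
      ν₀ (frontier U₀') = 0 ∧ ν₁ (frontier U₁') = 0 ∧
      (∀ j : ℕ, j ≤ n₁ → Disjoint ((T : X → X)^[j] '' closure U₁') (closure U₀')) ∧
      (∀ j : ℕ, j ≤ n₀ → Disjoint ((T : X → X)^[j] '' closure U₀') (closure U₁')) ∧
      ν₀ U₁' < ENNReal.ofReal η ∧ ν₁ U₀' < ENNReal.ofReal η := by
  -- complements are null
  have hc0 : ν₀ X₀ᶜ = 0 := by
    rw [measure_compl hB0 (measure_ne_top _ _), hfull0, measure_univ, tsub_self]
  have hc1 : ν₁ X₁ᶜ = 0 := by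
    rw [measure_compl hB1 (measure_ne_top _ _), hfull1, measure_univ, tsub_self]
  -- compact subsets of large measure inside U_i ∩ X_i
  have hm0' : ENNReal.ofReal (1 - η) < ν₀ (U₀ ∩ X₀) := by
    rwa [measure_inter_conull hc0]
  have hm1' : ENNReal.ofReal (1 - η) < ν₁ (U₁ ∩ X₁) := by
    rwa [measure_inter_conull hc1]
  obtain ⟨K₀, hK₀sub, hK₀c, hK₀m⟩ := (hU₀.measurableSet.inter hB0).exists_lt_isCompact hm0'
  obtain ⟨K₁, hK₁sub, hK₁c, hK₁m⟩ := (hU₁.measurableSet.inter hB1).exists_lt_isCompact hm1'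
  have hK₀X : K₀ ⊆ X₀ := hK₀sub.trans inter_subset_right
  have hK₁X : K₁ ⊆ X₁ := hK₁sub.trans inter_subset_right
  -- the orbit sets
  set A : Set X := ⋃ j ∈ Finset.range (n₀ + 1), (T : X → X)^[j] '' K₀ with hA
  set B : Set X := ⋃ j ∈ Finset.range (n₁ + 1), (T : X → X)^[j] '' K₁ with hB
  have hAc : IsCompact A :=
    (Finset.range (n₀ + 1)).finite_toSet.isCompact_biUnion
      (fun j _ => hK₀c.image (T.continuous.iterate j))
  have hBc : IsCompact B :=
    (Finset.range (n₁ + 1)).finite_toSet.isCompact_biUnion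
      (fun j _ => hK₁c.image (T.continuous.iterate j))
  have hAX : A ⊆ X₀ := by
    refine iUnion₂_subset fun j _ => ?_
    exact ((mapsTo_iterate_of_preimage_eq (T : X → X) hinv0 j).mono_left hK₀X).image_subset
  have hBX : B ⊆ X₁ := by
    refine iUnion₂_subset fun j _ => ?_
    exact ((mapsTo_iterate_of_preimage_eq (T : X → X) hinv1 j).mono_left hK₁X).image_subset
  have hABdisj : Disjoint A B := hXdisj.mono hAX hBX
  obtain ⟨δ, δpos, hδ⟩ := hABdisj.exists_thickenings hAc hBc.isClosed
  -- open sets of small opposite measure around the compacts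
  have hK₀null : ν₁ K₀ = 0 :=
    measure_mono_null (hK₀X.trans hXdisj.subset_compl_right) hc1
  have hK₁null : ν₀ K₁ = 0 :=
    measure_mono_null (hK₁X.trans (hXdisj.symm.subset_compl_right)) hc0
  obtain ⟨V₀, hV₀K, hV₀open, hV₀m⟩ := K₀.exists_isOpen_lt_of_lt (ENNReal.ofReal η)
    (by rw [hK₀null]; exact ENNReal.ofReal_pos.mpr hη0)
  obtain ⟨V₁, hV₁K, hV₁open, hV₁m⟩ := K₁.exists_isOpen_lt_of_lt (ENNReal.ofReal η)
    (by rw [hK₁null]; exact ENNReal.ofReal_pos.mpr hη0)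
  -- the enveloping open sets
  set W₀ : Set X := (U₀ ∩ V₀) ∩
    ⋂ j ∈ Finset.range (n₀ + 1), (T : X → X)^[j] ⁻¹' thickening δ A with hW₀
  set W₁ : Set X := (U₁ ∩ V₁) ∩
    ⋂ j ∈ Finset.range (n₁ + 1), (T : X → X)^[j] ⁻¹' thickening δ B with hW₁
  have hW₀open : IsOpen W₀ := by
    refine (hU₀.inter hV₀open).inter (isOpen_biInter_finset fun j _ => ?_)
    exact isOpen_thickening.preimage (T.continuous.iterate j)
  have hW₁open : IsOpen W₁ := by
    refine (hU₁.inter hV₁open).inter (isOpen_biInter_finset fun j _ => ?_)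
    exact isOpen_thickening.preimage (T.continuous.iterate j)
  have hK₀W : K₀ ⊆ W₀ := by
    refine subset_inter (subset_inter (hK₀sub.trans inter_subset_left) hV₀K) ?_
    refine subset_iInter₂ fun j hj => fun x hx => ?_
    exact self_subset_thickening δpos A
      (Set.mem_biUnion hj (Set.mem_image_of_mem _ hx))
  have hK₁W : K₁ ⊆ W₁ := by
    refine subset_inter (subset_inter (hK₁sub.trans inter_subset_left) hV₁K) ?_
    refine subset_iInter₂ fun j hj => fun x hx => ?_
    exact self_subset_thickening δpos B
      (Set.mem_biUnion hj (Set.mem_image_of_mem _ hx))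
  obtain ⟨r₀b, r₀bpos, hr₀b⟩ := hK₀c.exists_thickening_subset_open hW₀open hK₀W
  obtain ⟨r₁b, r₁bpos, hr₁b⟩ := hK₁c.exists_thickening_subset_open hW₁open hK₁W
  obtain ⟨r₀, hr₀Ioo, hr₀null⟩ := exists_null_frontier_thickening ν₀ K₀ r₀bpos
  obtain ⟨r₁, hr₁Ioo, hr₁null⟩ := exists_null_frontier_thickening ν₁ K₁ r₁bpos
  refine ⟨thickening r₀ K₀, thickening r₁ K₁, isOpen_thickening, isOpen_thickening,
    ?_, ?_, ?_, ?_, ?_, ?_, ?_, ?_, ?_, ?_⟩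
  · exact fun x hx => ((hr₀b ((thickening_mono hr₀Ioo.2.le K₀) hx)).1).1
  · exact fun x hx => ((hr₁b ((thickening_mono hr₁Ioo.2.le K₁) hx)).1).1
  · exact hK₀m.trans_le (measure_mono (self_subset_thickening hr₀Ioo.1 K₀))
  · exact hK₁m.trans_le (measure_mono (self_subset_thickening hr₁Ioo.1 K₁))
  · exact hr₀null
  · exact hr₁null
  · -- closures inside W's
    have hcl₀ : closure (thickening r₀ K₀) ⊆ W₀ :=
      (closure_thickening_subset_cthickening r₀ K₀).trans
        ((cthickening_subset_thickening' r₀bpos hr₀Ioo.2 K₀).trans hr₀b)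
    have hcl₁ : closure (thickening r₁ K₁) ⊆ W₁ :=
      (closure_thickening_subset_cthickening r₁ K₁).trans
        ((cthickening_subset_thickening' r₁bpos hr₁Ioo.2 K₁).trans hr₁b)
    have hclA : closure (thickening r₀ K₀) ⊆ thickening δ A := by
      intro x hx
      have := (hcl₀ hx).2
      simpa using Set.mem_iInter₂.mp this 0 (Finset.mem_range.mpr (Nat.succ_pos n₀))
    intro j hj
    refine Set.disjoint_left.mpr fun x hx hx' => ?_
    obtain ⟨y, hy, rfl⟩ := hx
    have hyB : (T : X → X)^[j] y ∈ thickening δ B :=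
      Set.mem_iInter₂.mp (hcl₁ hy).2 j (Finset.mem_range.mpr (Nat.lt_succ_of_le hj))
    exact Set.disjoint_right.mp hδ hyB (hclA hx')
  · have hcl₀ : closure (thickening r₀ K₀) ⊆ W₀ :=
      (closure_thickening_subset_cthickening r₀ K₀).trans
        ((cthickening_subset_thickening' r₀bpos hr₀Ioo.2 K₀).trans hr₀b)
    have hcl₁ : closure (thickening r₁ K₁) ⊆ W₁ :=
      (closure_thickening_subset_cthickening r₁ K₁).trans
        ((cthickening_subset_thickening' r₁bpos hr₁Ioo.2 K₁).trans hr₁b)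
    have hclB : closure (thickening r₁ K₁) ⊆ thickening δ B := by
      intro x hx
      have := (hcl₁ hx).2
      simpa using Set.mem_iInter₂.mp this 0 (Finset.mem_range.mpr (Nat.succ_pos n₁))
    intro j hj
    refine Set.disjoint_left.mpr fun x hx hx' => ?_
    obtain ⟨y, hy, rfl⟩ := hx
    have hyA : (T : X → X)^[j] y ∈ thickening δ A :=
      Set.mem_iInter₂.mp (hcl₀ hy).2 j (Finset.mem_range.mpr (Nat.lt_succ_of_le hj))
    exact Set.disjoint_left.mp hδ hyA (hclB hx')
  · refine lt_of_le_of_lt (measure_mono ?_) hV₁m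
    exact fun x hx => ((hr₁b ((thickening_mono hr₁Ioo.2.le K₁) hx)).1).2
  · refine lt_of_le_of_lt (measure_mono ?_) hV₀m
    exact fun x hx => ((hr₀b ((thickening_mono hr₀Ioo.2.le K₀) hx)).1).2
end

section
/- Let X be a set, g : X → X a map, and U₀, U₁ ⊆ X disjoint subsets. Let n₀, n₁ ≥ 1 be integers such that: for every y ∈ U₁ and every integer 1 ≤ j ≤ n₁, g^j(y) ∉ U₀, and for every y ∈ U₀ and every integer 1 ≤ j ≤ n₀, g^j(y) ∉ U₁. Let α ∈ (0, 1], η ∈ (0, 1), and let n be an integer with max(n₀, n₁) < η·n. Let x ∈ X satisfy: #{0 ≤ i ≤ n−1 : g^i(x) ∈ U₀ ∪ U₁} > (1 − η)·n, #{0 ≤ i ≤ n−1 : g^i(x) ∈ U₀} < (1 − α + η)·n, and #{0 ≤ i ≤ n−1 : g^i(x) ∈ U₁} < (α + η)·n. Then there exist an integer l ≥ 1, integers −1 = t₀ < t₁ < ⋯ < t_l = n − 1, and labels b₀, …, b_{l−1} ∈ {1, 2, 3} such that for each 0 ≤ j ≤ l − 1: if b_j = 1 then g^{t_j + 1}(x)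 ∈ U₁ and t_{j+1} − t_j = n₁; if b_j = 2 then g^{t_j + 1}(x) ∈ U₀ and t_{j+1} − t_j = n₀; and if b_j = 3 then either g^{t_j + 1 + i}(x) ∉ U₀ ∪ U₁ for every integer 0 ≤ i ≤ t_{j+1} − t_j − 1, or j = l − 1, g^{t_j+1}(x) ∈ U₀ ∪ U₁ and t_{j+1} − t_j ≤ max(n₀, n₁). Moreover: Σ_{j : b_j = 1} (t_{j+1} − t_j) ≤ (α + 2η)·n, Σ_{j : b_j = 2} (t_{j+1} − t_j) ≤ (1 − α + 2η)·n, and Σ_{j : b_j = 3} (t_{j+1} − t_j) ≤ 2η·n. -/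
open Classical in
/-- Length of the orbit segment started at position `p`. -/
noncomputable def stmt12Len {X : Type*} (g : X → X) (U₀ U₁ : Set X)
    (n₀ n₁ n : ℕ) (x : X) (p : ℕ) : ℕ :=
  if g^[p] x ∈ U₁ then (if p + n₁ ≤ n then n₁ else n - p)
  else if g^[p] x ∈ U₀ then (if p + n₀ ≤ n then n₀ else n - p)
  else 1

open Classical in
/-- Label of the orbit segment started at position `p`. -/
noncomputable def stmt12Lab {X : Type*} (g : X → X) (U₀ U₁ : Set X)
    (n₀ n₁ n : ℕ) (x : X) (p : ℕ) : ℕ :=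
  if g^[p] x ∈ U₁ then (if p + n₁ ≤ n then 1 else 3)
  else if g^[p] x ∈ U₀ then (if p + n₀ ≤ n then 2 else 3)
  else 3

/-- Starting positions of the successive segments. -/
noncomputable def stmt12S {X : Type*} (g : X → X) (U₀ U₁ : Set X)
    (n₀ n₁ n : ℕ) (x : X) : ℕ → ℕ
  | 0 => 0
  | k + 1 => stmt12S g U₀ U₁ n₀ n₁ n x k
      + stmt12Len g U₀ U₁ n₀ n₁ n x (stmt12S g U₀ U₁ n₀ n₁ n x k)

lemma stmt12_case {X : Type*} (g : X → X) (U₀ U₁ : Set X)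
    (n₀ n₁ n : ℕ) (x : X) (hn₀ : 1 ≤ n₀) (hn₁ : 1 ≤ n₁) (p : ℕ) (hp : p < n) :
    (stmt12Lab g U₀ U₁ n₀ n₁ n x p = 1 ∧ g^[p] x ∈ U₁ ∧
      stmt12Len g U₀ U₁ n₀ n₁ n x p = n₁ ∧ p + n₁ ≤ n) ∨
    (stmt12Lab g U₀ U₁ n₀ n₁ n x p = 2 ∧ g^[p] x ∈ U₀ ∧
      stmt12Len g U₀ U₁ n₀ n₁ n x p = n₀ ∧ p + n₀ ≤ n) ∨
    (stmt12Lab g U₀ U₁ n₀ n₁ n x p = 3 ∧ g^[p] x ∉ U₀ ∪ U₁ ∧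
      stmt12Len g U₀ U₁ n₀ n₁ n x p = 1) ∨
    (stmt12Lab g U₀ U₁ n₀ n₁ n x p = 3 ∧ g^[p] x ∈ U₀ ∪ U₁ ∧
      p + stmt12Len g U₀ U₁ n₀ n₁ n x p = n ∧
      stmt12Len g U₀ U₁ n₀ n₁ n x p ≤ max n₀ n₁ ∧
      1 ≤ stmt12Len g U₀ U₁ n₀ n₁ n x p) := by
  classical
  unfold stmt12Lab stmt12Len
  by_cases h1 : g^[p] x ∈ U₁
  · by_cases h2 : p + n₁ ≤ n
    · exact Or.inl ⟨by simp [h1, h2], h1, by simp [h1, h2], h2⟩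
    · refine Or.inr (Or.inr (Or.inr ⟨by simp [h1, h2], Or.inr h1, ?_, ?_, ?_⟩)) <;>
        simp [h1, h2] <;> omega
  · by_cases h3 : g^[p] x ∈ U₀
    · by_cases h4 : p + n₀ ≤ n
      · exact Or.inr (Or.inl ⟨by simp [h1, h3, h4], h3, by simp [h1, h3, h4], h4⟩)
      · refine Or.inr (Or.inr (Or.inr ⟨by simp [h1, h3, h4], Or.inl h3, ?_, ?_, ?_⟩)) <;>
          simp [h1, h3, h4] <;> omega
    · exact Or.inr (Or.inr (Or.inl ⟨by simp [h1, h3], by simp [h1, h3], by simp [h1, h3]⟩))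

/-- Decomposition of long orbit segments of a typical point into rectangle
segments (label 1), small entropy segments (label 2) and wild segments
(label 3), with the stated bounds on the total length of each class. -/
theorem statement12 {X : Type*} (g : X → X) (U₀ U₁ : Set X)
    (hdisj : Disjoint U₀ U₁)
    (n₀ n₁ : ℕ) (hn₀ : 1 ≤ n₀) (hn₁ : 1 ≤ n₁)
    (havoid₁ : ∀ y ∈ U₁, ∀ j : ℕ, 1 ≤ j → j ≤ n₁ → g^[j] y ∉ U₀)
    (havoid₀ : ∀ y ∈ U₀, ∀ j : ℕ, 1 ≤ j → j ≤ n₀ → g^[j] y ∉ U₁)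
    (α η : ℝ) (hα0 : 0 < α) (hα1 : α ≤ 1) (hη0 : 0 < η) (hη1 : η < 1)
    (n : ℕ) (hn : (max n₀ n₁ : ℝ) < η * n)
    (x : X)
    (hcount : (1 - η) * n < ({i : ℕ | i < n ∧ g^[i] x ∈ U₀ ∪ U₁}.ncard : ℝ))
    (hcount0 : ({i : ℕ | i < n ∧ g^[i] x ∈ U₀}.ncard : ℝ) < (1 - α + η) * n)
    (hcount1 : ({i : ℕ | i < n ∧ g^[i] x ∈ U₁}.ncard : ℝ) < (α + η) * n) :
    ∃ (l : ℕ) (t : ℕ → ℤ) (b : ℕ → ℕ),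
      1 ≤ l ∧ t 0 = -1 ∧ t l = (n : ℤ) - 1 ∧
      (∀ j, j < l → t j < t (j + 1)) ∧
      (∀ j, j < l → b j = 1 ∨ b j = 2 ∨ b j = 3) ∧
      (∀ j, j < l → b j = 1 →
        g^[(t j + 1).toNat] x ∈ U₁ ∧ t (j + 1) - t j = (n₁ : ℤ)) ∧
      (∀ j, j < l → b j = 2 →
        g^[(t j + 1).toNat] x ∈ U₀ ∧ t (j + 1) - t j = (n₀ : ℤ)) ∧
      (∀ j, j < l → b j = 3 →
        ((∀ i : ℕ, (i : ℤ) ≤ t (j + 1) - t j - 1 →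
            g^[(t j + 1).toNat + i] x ∉ U₀ ∪ U₁) ∨
          (j = l - 1 ∧ g^[(t j + 1).toNat] x ∈ U₀ ∪ U₁ ∧
            t (j + 1) - t j ≤ (max n₀ n₁ : ℤ)))) ∧
      (((∑ j ∈ (Finset.range l).filter (fun j => b j = 1), (t (j + 1) - t j) : ℤ) : ℝ) ≤
        (α + 2 * η) * n) ∧
      (((∑ j ∈ (Finset.range l).filter (fun j => b j = 2), (t (j + 1) - t j) : ℤ) : ℝ) ≤
        (1 - α + 2 * η) * n) ∧
      (((∑ j ∈ (Finset.range l).filter (fun j => b j = 3), (t (j + 1) - t j) : ℤ) : ℝ) ≤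
        2 * η * n) := by
  classical
  set L := stmt12Len g U₀ U₁ n₀ n₁ n x with hLdef
  set lab := stmt12Lab g U₀ U₁ n₀ n₁ n x with hlabdef
  set s := stmt12S g U₀ U₁ n₀ n₁ n x with hsdef
  have hs0 : s 0 = 0 := rfl
  have hss : ∀ k, s (k + 1) = s k + L (s k) := fun k => rfl
  have hnpos : 0 < n := by
    rcases Nat.eq_zero_or_pos n with h | h
    · have h1 : (0 : ℝ) ≤ (max n₀ n₁ : ℕ) := Nat.cast_nonneg _
      rw [h] at hn; simp at hn; linarith
    · exact h
  have hcase : ∀ p, p < n →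
      (lab p = 1 ∧ g^[p] x ∈ U₁ ∧ L p = n₁ ∧ p + n₁ ≤ n) ∨
      (lab p = 2 ∧ g^[p] x ∈ U₀ ∧ L p = n₀ ∧ p + n₀ ≤ n) ∨
      (lab p = 3 ∧ g^[p] x ∉ U₀ ∪ U₁ ∧ L p = 1) ∨
      (lab p = 3 ∧ g^[p] x ∈ U₀ ∪ U₁ ∧ p + L p = n ∧ L p ≤ max n₀ n₁ ∧ 1 ≤ L p) :=
    fun p hp => stmt12_case g U₀ U₁ n₀ n₁ n x hn₀ hn₁ p hp
  have hLpos : ∀ p, p < n → 1 ≤ L p := by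
    intro p hp
    rcases hcase p hp with ⟨_, _, h, _⟩ | ⟨_, _, h, _⟩ | ⟨_, _, h⟩ | ⟨_, _, _, _, h⟩ <;> omega
  have hLle : ∀ p, p < n → p + L p ≤ n := by
    intro p hp
    rcases hcase p hp with ⟨_, _, h, h'⟩ | ⟨_, _, h, h'⟩ | ⟨_, _, h⟩ | ⟨_, _, h, _, _⟩ <;> omega
  have hex : ∃ k, s k = n := by
    have key : ∀ k, (∃ m, s m = n) ∨ (s k < n ∧ k ≤ s k) := by
      intro k
      induction k with
      | zero => exact Or.inr ⟨by omega, by omega⟩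
      | succ k ih =>
        rcases ih with h | ⟨h1, h2⟩
        · exact Or.inl h
        · have h3 := hLpos (s k) h1
          have h4 := hLle (s k) h1
          rcases eq_or_lt_of_le (show s (k + 1) ≤ n by rw [hss]; omega) with h5 | h5
          · exact Or.inl ⟨k + 1, h5⟩
          · exact Or.inr ⟨h5, by rw [hss]; omega⟩
    rcases key n with h | ⟨h1, h2⟩
    · exact h
    · omega
  set l := Nat.find hex with hldef
  have hsl : s l = n := Nat.find_spec hex
  have hmin : ∀ k, k < l → s k ≠ n := fun k hk => Nat.find_min hex hk
  have hl1 : 1 ≤ l := by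
    rcases Nat.eq_zero_or_pos l with h | h
    · rw [h] at hsl; omega
    · exact h
  have hsle : ∀ j, j ≤ l → s j ≤ n := by
    intro j hj
    induction j with
    | zero => omega
    | succ j ih =>
      have hj' : j < l := by omega
      have h1 := ih (le_of_lt hj')
      have h2 : s j < n := lt_of_le_of_ne h1 (hmin j hj')
      rw [hss]; exact hLle (s j) h2
  have hslt : ∀ j, j < l → s j < n :=
    fun j hj => lt_of_le_of_ne (hsle j (le_of_lt hj)) (hmin j hj)
  -- named finsets
  set A : Finset ℕ := (Finset.range n).filter (fun i => g^[i] x ∈ U₀ ∪ U₁) with hAdef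
  set A0 : Finset ℕ := (Finset.range n).filter (fun i => g^[i] x ∈ U₀) with hA0def
  set A1 : Finset ℕ := (Finset.range n).filter (fun i => g^[i] x ∈ U₁) with hA1def
  set C0 : Finset ℕ := (Finset.range n).filter (fun i => g^[i] x ∉ U₀) with hC0def
  set C1 : Finset ℕ := (Finset.range n).filter (fun i => g^[i] x ∉ U₁) with hC1def
  set Cb : Finset ℕ := (Finset.range n).filter (fun i => g^[i] x ∉ U₀ ∪ U₁) with hCbdef
  -- generic counting lemma
  have key : ∀ (c : ℕ) (F : Finset ℕ) (M : ℕ),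
      (∀ j, j < l → lab (s j) = c →
        (∀ i, s j ≤ i → i < s (j + 1) → i ∈ F) ∨ (s (j + 1) = n ∧ L (s j) ≤ M)) →
      (∑ j ∈ (Finset.range l).filter (fun j => lab (s j) = c), L (s j)) ≤
        F.card + M := by
    intro c F M hcov
    have main : ∀ k, k ≤ l →
        (∑ j ∈ Finset.range k, if lab (s j) = c then L (s j) else 0) ≤
          ((Finset.range (s k)).filter (fun i => i ∈ F)).card + (if s k = n then M else 0) := by
      intro k hk
      induction k with
      | zero => simp [hs0, hnpos.ne]
      | succ k ih =>
        have hkl : k < l := by omega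
        have ihh := ih (le_of_lt hkl)
        have hskn : s k < n := hslt k hkl
        rw [if_neg (by omega)] at ihh
        have hmono : ((Finset.range (s k)).filter (fun i => i ∈ F)).card ≤
            ((Finset.range (s (k + 1))).filter (fun i => i ∈ F)).card := by
          apply Finset.card_le_card
          apply Finset.filter_subset_filter
          apply Finset.range_subset_range.mpr
          rw [hss]; omega
        rw [Finset.sum_range_succ]
        by_cases hc : lab (s k) = c
        · rcases hcov k hkl hc with hall | ⟨hfin, hM⟩
          · have hsplit : (Finset.range (s (k + 1))).filter (fun i => i ∈ F) =
                ((Finset.range (s k)).filter (fun i => i ∈ F)) ∪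
                ((Finset.Ico (s k) (s (k + 1))).filter (fun i => i ∈ F)) := by
              rw [Finset.range_eq_Ico, Finset.range_eq_Ico, ← Finset.filter_union,
                Finset.Ico_union_Ico_eq_Ico (Nat.zero_le _) (by rw [hss]; omega)]
            have hdisj' : Disjoint ((Finset.range (s k)).filter (fun i => i ∈ F))
                ((Finset.Ico (s k) (s (k + 1))).filter (fun i => i ∈ F)) := by
              rw [Finset.disjoint_left]
              intro a ha hb
              rw [Finset.mem_filter, Finset.mem_range] at ha
              rw [Finset.mem_filter, Finset.mem_Ico] at hb
              omega
            have hic : ((Finset.Ico (s k) (s (k + 1))).filter (fun i => i ∈ F)) =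
                Finset.Ico (s k) (s (k + 1)) := by
              apply Finset.filter_true_of_mem
              intro i hi
              rw [Finset.mem_Ico] at hi
              exact hall i hi.1 hi.2
            have hcard : ((Finset.range (s (k + 1))).filter (fun i => i ∈ F)).card =
                ((Finset.range (s k)).filter (fun i => i ∈ F)).card + L (s k) := by
              rw [hsplit, Finset.card_union_of_disjoint hdisj', hic, Nat.card_Ico, hss]
              omega
            rw [if_pos hc, hcard]
            split <;> omega
          · rw [if_pos hc, if_pos hfin]
            omega
        · rw [if_neg hc]
          split <;> omega
    have hmain := main l le_rfl
    rw [hsl, if_pos rfl] at hmain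
    have hsubF : ((Finset.range n).filter (fun i => i ∈ F)).card ≤ F.card :=
      Finset.card_le_card (fun i hi => (Finset.mem_filter.mp hi).2)
    rw [Finset.sum_filter]
    omega
  -- coverage facts for each label
  have cov1 : ∀ j, j < l → lab (s j) = 1 →
      ∀ i, s j ≤ i → i < s (j + 1) → i ∈ C0 := by
    intro j hj hc i hi1 hi2
    have hin : i < n := lt_of_lt_of_le hi2 (hsle (j + 1) hj)
    rw [hC0def, Finset.mem_filter, Finset.mem_range]
    refine ⟨hin, ?_⟩
    rcases hcase (s j) (hslt j hj) with ⟨_, hU, hLn, _⟩ | ⟨h, _, _, _⟩ | ⟨h, _, _⟩ |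
      ⟨h, _, _, _, _⟩
    · rw [hss, hLn] at hi2
      set d := i - s j with hd
      have hid : i = d + s j := by omega
      rcases Nat.eq_zero_or_pos d with h0 | h0
      · have hieq : i = s j := by omega
        rw [hieq]
        exact Set.disjoint_right.1 hdisj hU
      · rw [hid, Function.iterate_add_apply]
        exact havoid₁ _ hU d h0 (by omega)
    all_goals omega
  have cov2 : ∀ j, j < l → lab (s j) = 2 →
      ∀ i, s j ≤ i → i < s (j + 1) → i ∈ C1 := by
    intro j hj hc i hi1 hi2
    have hin : i < n := lt_of_lt_of_le hi2 (hsle (j + 1) hj)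
    rw [hC1def, Finset.mem_filter, Finset.mem_range]
    refine ⟨hin, ?_⟩
    rcases hcase (s j) (hslt j hj) with ⟨h, _, _, _⟩ | ⟨_, hU, hLn, _⟩ | ⟨h, _, _⟩ |
      ⟨h, _, _, _, _⟩
    · omega
    · rw [hss, hLn] at hi2
      set d := i - s j with hd
      have hid : i = d + s j := by omega
      rcases Nat.eq_zero_or_pos d with h0 | h0
      · have hieq : i = s j := by omega
        rw [hieq]
        exact Set.disjoint_left.1 hdisj hU
      · rw [hid, Function.iterate_add_apply]
        exact havoid₀ _ hU d h0 (by omega)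
    all_goals omega
  have cov3 : ∀ j, j < l → lab (s j) = 3 →
      (∀ i, s j ≤ i → i < s (j + 1) → i ∈ Cb) ∨
      (s (j + 1) = n ∧ L (s j) ≤ max n₀ n₁) := by
    intro j hj hc
    rcases hcase (s j) (hslt j hj) with ⟨h, _, _, _⟩ | ⟨h, _, _, _⟩ |
      ⟨_, hU, hLn⟩ | ⟨_, _, hfin, hM, _⟩
    · omega
    · omega
    · left
      intro i hi1 hi2
      have hin : i < n := lt_of_lt_of_le hi2 (hsle (j + 1) hj)
      rw [hCbdef, Finset.mem_filter, Finset.mem_range]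
      refine ⟨hin, ?_⟩
      rw [hss, hLn] at hi2
      have hieq : i = s j := by omega
      rw [hieq]; exact hU
    · right
      exact ⟨by rw [hss]; omega, hM⟩
  have sum1 := key 1 C0 0 (fun j hj hc => Or.inl (cov1 j hj hc))
  have sum2 := key 2 C1 0 (fun j hj hc => Or.inl (cov2 j hj hc))
  have sum3 := key 3 Cb (max n₀ n₁) cov3
  -- counting conversions
  have hsetA : {i : ℕ | i < n ∧ g^[i] x ∈ U₀ ∪ U₁} = ↑A := by
    ext i; rw [hAdef]; simp [Finset.mem_filter]
  have hsetA0 : {i : ℕ | i < n ∧ g^[i] x ∈ U₀} = ↑A0 := by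
    ext i; rw [hA0def]; simp [Finset.mem_filter]
  have hsetA1 : {i : ℕ | i < n ∧ g^[i] x ∈ U₁} = ↑A1 := by
    ext i; rw [hA1def]; simp [Finset.mem_filter]
  rw [hsetA, Set.ncard_coe_finset] at hcount
  rw [hsetA0, Set.ncard_coe_finset] at hcount0
  rw [hsetA1, Set.ncard_coe_finset] at hcount1
  have hC0card : A0.card + C0.card = n := by
    have h1 : A0 ∪ C0 = Finset.range n := by
      ext i
      rw [Finset.mem_union, hA0def, hC0def, Finset.mem_filter, Finset.mem_filter,
        Finset.mem_range]
      constructor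
      · rintro (h | h) <;> exact h.1
      · intro h
        by_cases hu : g^[i] x ∈ U₀
        · exact Or.inl ⟨h, hu⟩
        · exact Or.inr ⟨h, hu⟩
    have h2 : Disjoint A0 C0 := by
      rw [Finset.disjoint_left]
      intro a ha hb
      rw [hA0def, Finset.mem_filter] at ha
      rw [hC0def, Finset.mem_filter] at hb
      exact hb.2 ha.2
    rw [← Finset.card_union_of_disjoint h2, h1, Finset.card_range]
  have hC1card : A1.card + C1.card = n := by
    have h1 : A1 ∪ C1 = Finset.range n := by
      ext i
      rw [Finset.mem_union, hA1def, hC1def, Finset.mem_filter, Finset.mem_filter,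
        Finset.mem_range]
      constructor
      · rintro (h | h) <;> exact h.1
      · intro h
        by_cases hu : g^[i] x ∈ U₁
        · exact Or.inl ⟨h, hu⟩
        · exact Or.inr ⟨h, hu⟩
    have h2 : Disjoint A1 C1 := by
      rw [Finset.disjoint_left]
      intro a ha hb
      rw [hA1def, Finset.mem_filter] at ha
      rw [hC1def, Finset.mem_filter] at hb
      exact hb.2 ha.2
    rw [← Finset.card_union_of_disjoint h2, h1, Finset.card_range]
  have hCbcard : A.card + Cb.card = n := by
    have h1 : A ∪ Cb = Finset.range n := by
      ext i
      rw [Finset.mem_union, hAdef, hCbdef, Finset.mem_filter, Finset.mem_filter,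
        Finset.mem_range]
      constructor
      · rintro (h | h) <;> exact h.1
      · intro h
        by_cases hu : g^[i] x ∈ U₀ ∪ U₁
        · exact Or.inl ⟨h, hu⟩
        · exact Or.inr ⟨h, hu⟩
    have h2 : Disjoint A Cb := by
      rw [Finset.disjoint_left]
      intro a ha hb
      rw [hAdef, Finset.mem_filter] at ha
      rw [hCbdef, Finset.mem_filter] at hb
      exact hb.2 ha.2
    rw [← Finset.card_union_of_disjoint h2, h1, Finset.card_range]
  have hsub : A.card ≤ A0.card + A1.card := by
    calc A.card ≤ (A0 ∪ A1).card := by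
          apply Finset.card_le_card
          intro i hi
          rw [hAdef, Finset.mem_filter] at hi
          rw [Finset.mem_union, hA0def, hA1def, Finset.mem_filter, Finset.mem_filter]
          rcases hi.2 with h | h
          · exact Or.inl ⟨hi.1, h⟩
          · exact Or.inr ⟨hi.1, h⟩
      _ ≤ A0.card + A1.card := Finset.card_union_le _ _
  -- final assembly
  have Hmono : ∀ j, j < l → (s j : ℤ) - 1 < (s (j + 1) : ℤ) - 1 := by
    intro j hj
    have h1 := hLpos (s j) (hslt j hj)
    have h2 := hss j
    omega
  have Hlab : ∀ j, j < l → lab (s j) = 1 ∨ lab (s j) = 2 ∨ lab (s j) = 3 := by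
    intro j hj
    rcases hcase (s j) (hslt j hj) with ⟨h, _, _, _⟩ | ⟨h, _, _, _⟩ | ⟨h, _, _⟩ |
      ⟨h, _, _, _, _⟩ <;> simp [h]
  have Htn : ∀ j, ((s j : ℤ) - 1 + 1).toNat = s j := by intro j; omega
  have H1 : ∀ j, j < l → lab (s j) = 1 →
      g^[((s j : ℤ) - 1 + 1).toNat] x ∈ U₁ ∧
        ((s (j + 1) : ℤ) - 1) - ((s j : ℤ) - 1) = (n₁ : ℤ) := by
    intro j hj hb
    rcases hcase (s j) (hslt j hj) with ⟨h, hU, hLn, _⟩ | ⟨h, _, _, _⟩ | ⟨h, _, _⟩ |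
      ⟨h, _, _, _, _⟩
    · refine ⟨by rw [Htn j]; exact hU, ?_⟩
      have h2 := hss j
      omega
    all_goals omega
  have H2 : ∀ j, j < l → lab (s j) = 2 →
      g^[((s j : ℤ) - 1 + 1).toNat] x ∈ U₀ ∧
        ((s (j + 1) : ℤ) - 1) - ((s j : ℤ) - 1) = (n₀ : ℤ) := by
    intro j hj hb
    rcases hcase (s j) (hslt j hj) with ⟨h, _, _, _⟩ | ⟨h, hU, hLn, _⟩ | ⟨h, _, _⟩ |
      ⟨h, _, _, _, _⟩
    · omega
    · refine ⟨by rw [Htn j]; exact hU, ?_⟩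
      have h2 := hss j
      omega
    all_goals omega
  have H3 : ∀ j, j < l → lab (s j) = 3 →
      ((∀ i : ℕ, (i : ℤ) ≤ ((s (j + 1) : ℤ) - 1) - ((s j : ℤ) - 1) - 1 →
          g^[((s j : ℤ) - 1 + 1).toNat + i] x ∉ U₀ ∪ U₁) ∨
        (j = l - 1 ∧ g^[((s j : ℤ) - 1 + 1).toNat] x ∈ U₀ ∪ U₁ ∧
          ((s (j + 1) : ℤ) - 1) - ((s j : ℤ) - 1) ≤ (max n₀ n₁ : ℤ))) := by
    intro j hj hb
    rcases hcase (s j) (hslt j hj) with ⟨h, _, _, _⟩ | ⟨h, _, _, _⟩ | ⟨h, hU, hLn⟩ |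
      ⟨h, hU, hfin, hM, _⟩
    · omega
    · omega
    · left
      intro i hi
      have h2 := hss j
      have hi0 : i = 0 := by omega
      rw [Htn j, hi0]
      simpa using hU
    · right
      have hstep : s (j + 1) = n := by rw [hss]; omega
      have hlle : l ≤ j + 1 := Nat.find_le hstep
      refine ⟨by omega, by rw [Htn j]; exact hU, ?_⟩
      have h2 := hss j
      have hmm : (max n₀ n₁ : ℤ) = ((max n₀ n₁ : ℕ) : ℤ) := by push_cast; rfl
      rw [hmm]
      omega
  -- sums, converted to ℤ then ℝ
  have hsumcast : ∀ c : ℕ,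
      (∑ j ∈ (Finset.range l).filter (fun j => lab (s j) = c),
          (((s (j + 1) : ℤ) - 1) - ((s j : ℤ) - 1))) =
        ((∑ j ∈ (Finset.range l).filter (fun j => lab (s j) = c), L (s j) : ℕ) : ℤ) := by
    intro c
    rw [Nat.cast_sum]
    apply Finset.sum_congr rfl
    intro j hj
    have h2 := hss j
    omega
  have hcastR : ∀ m : ℕ, (((m : ℤ) : ℝ)) = (m : ℝ) := by intro m; push_cast; rfl
  have hc0R : (A0.card : ℝ) +
      (C0.card : ℝ) = n := by
    exact_mod_cast hC0card
  have hc1R : (A1.card : ℝ) +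
      (C1.card : ℝ) = n := by
    exact_mod_cast hC1card
  have hcbR : (A.card : ℝ) +
      (Cb.card : ℝ) = n := by
    exact_mod_cast hCbcard
  have hsubR : (A.card : ℝ) ≤
      (A0.card : ℝ) +
      (A1.card : ℝ) := by
    exact_mod_cast hsub
  have S1 : ((∑ j ∈ (Finset.range l).filter (fun j => lab (s j) = 1),
      (((s (j + 1) : ℤ) - 1) - ((s j : ℤ) - 1)) : ℤ) : ℝ) ≤ (α + 2 * η) * n := by
    rw [hsumcast 1, hcastR]
    have h1 : ((∑ j ∈ (Finset.range l).filter (fun j => lab (s j) = 1), L (s j) : ℕ) : ℝ) ≤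
        (C0.card : ℝ) :=
      Nat.cast_le.mpr (by omega)
    linarith
  have S2 : ((∑ j ∈ (Finset.range l).filter (fun j => lab (s j) = 2),
      (((s (j + 1) : ℤ) - 1) - ((s j : ℤ) - 1)) : ℤ) : ℝ) ≤ (1 - α + 2 * η) * n := by
    rw [hsumcast 2, hcastR]
    have h1 : ((∑ j ∈ (Finset.range l).filter (fun j => lab (s j) = 2), L (s j) : ℕ) : ℝ) ≤
        (C1.card : ℝ) :=
      Nat.cast_le.mpr (by omega)
    linarith
  have S3 : ((∑ j ∈ (Finset.range l).filter (fun j => lab (s j) = 3),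
      (((s (j + 1) : ℤ) - 1) - ((s j : ℤ) - 1)) : ℤ) : ℝ) ≤ 2 * η * n := by
    rw [hsumcast 3, hcastR]
    have h1 : ((∑ j ∈ (Finset.range l).filter (fun j => lab (s j) = 3), L (s j) : ℕ) : ℝ) ≤
        (Cb.card : ℝ) +
        ((max n₀ n₁ : ℕ) : ℝ) := by
      have := Nat.cast_le (α := ℝ) |>.mpr sum3
      push_cast at this ⊢
      linarith
    have hmx : ((max n₀ n₁ : ℕ) : ℝ) < η * n := by
      have : ((max n₀ n₁ : ℕ) : ℝ) = (max n₀ n₁ : ℝ) := by push_cast; rfl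
      rw [this]; exact hn
    linarith
  exact ⟨l, fun j => (s j : ℤ) - 1, fun j => lab (s j), hl1,
    by norm_num [hs0], by norm_num [hsl], Hmono, Hlab, H1, H2, H3, S1, S2, S3⟩
end

section
/- Let (X, d) be a metric space, let Λ ≥ 1, and let g : X → X be Lipschitz with constant Λ, i.e., d(g(x), g(y)) ≤ Λ·d(x, y) for all x, y ∈ X. Let ε > 0, let m be a natural number, and let γ : [0, 1] → X satisfy d(γ(s), γ(t)) ≤ ε·|s − t| for all s, t ∈ [0, 1]. Then there exists a finite set F ⊆ [0, 1] with cardinality at most 2·⌈Λ^m⌉ such that γ([0, 1]) ⊆ ⋃_{t ∈ F} B_g(γ(t), m, ε). -/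
/-- The `(g, m, ε)`-Bowen ball at `x`. -/
def bowenBall {X : Type*} [PseudoMetricSpace X] (g : X → X) (x : X) (m : ℕ)
    (ε : ℝ) : Set X :=
  {y | ∀ j : ℕ, j ≤ m → dist (g^[j] x) (g^[j] y) < ε}

lemma iter_lip {X : Type*} [MetricSpace X] (Λ : ℝ) (hΛ : 1 ≤ Λ)
    (g : X → X) (hg : ∀ x y : X, dist (g x) (g y) ≤ Λ * dist x y)
    (x y : X) : ∀ j : ℕ, dist (g^[j] x) (g^[j] y) ≤ Λ ^ j * dist x y := by
  intro j
  induction j with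
  | zero => simp
  | succ n ih =>
      rw [Function.iterate_succ_apply', Function.iterate_succ_apply']
      calc dist (g (g^[n] x)) (g (g^[n] y)) ≤ Λ * dist (g^[n] x) (g^[n] y) := hg _ _
        _ ≤ Λ * (Λ ^ n * dist x y) := by
            apply mul_le_mul_of_nonneg_left ih (by linarith)
        _ = Λ ^ (n + 1) * dist x y := by ring

/-- A curve of Lipschitz constant `ε` is covered by at most `2⌈Λ^m⌉` Bowen
balls of order `m` and radius `ε` for a `Λ`-Lipschitz map `g`. -/
theorem statement14 {X : Type*} [MetricSpace X] (Λ : ℝ) (hΛ : 1 ≤ Λ)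
    (g : X → X) (hg : ∀ x y : X, dist (g x) (g y) ≤ Λ * dist x y)
    (ε : ℝ) (hε : 0 < ε) (m : ℕ)
    (γ : ℝ → X)
    (hγ : ∀ s ∈ Set.Icc (0:ℝ) 1, ∀ t ∈ Set.Icc (0:ℝ) 1,
      dist (γ s) (γ t) ≤ ε * |s - t|) :
    ∃ F : Finset ℝ, (↑F : Set ℝ) ⊆ Set.Icc (0:ℝ) 1 ∧ F.card ≤ 2 * ⌈Λ ^ m⌉₊ ∧
      γ '' Set.Icc (0:ℝ) 1 ⊆ ⋃ t ∈ F, bowenBall g (γ t) m ε := by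
  classical
  set N : ℕ := ⌈Λ ^ m⌉₊ with hNdef
  have hΛm : (1 : ℝ) ≤ Λ ^ m := one_le_pow₀ hΛ
  have hN1 : 1 ≤ N := Nat.one_le_ceil_iff.mpr (by linarith)
  have hNpos : (0 : ℝ) < (N : ℝ) := by exact_mod_cast hN1
  have hΛmN : Λ ^ m ≤ (N : ℝ) := Nat.le_ceil _
  set pt : ℕ → ℝ := fun k => (2 * k + 1) / (2 * N) with hptdef
  refine ⟨(Finset.range N).image pt, ?_, ?_, ?_⟩
  · intro t ht
    simp only [Finset.coe_image, Set.mem_image, Finset.mem_coe,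
      Finset.mem_range] at ht
    obtain ⟨k, hk, rfl⟩ := ht
    constructor
    · apply div_nonneg (by positivity) (by positivity)
    · rw [div_le_one (by positivity)]
      have : (k : ℝ) + 1 ≤ N := by exact_mod_cast hk
      linarith
  · calc ((Finset.range N).image pt).card ≤ N := by
          simpa using Finset.card_image_le (s := Finset.range N) (f := pt)
      _ ≤ 2 * N := by omega
  · rintro x ⟨s, hs, rfl⟩
    -- choose k
    set k : ℕ := min ⌊s * N⌋₊ (N - 1) with hkdef
    have hkN : k < N := by omega
    have hclose : |s - pt k| ≤ 1 / (2 * N) := by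
      have hs0 := hs.1
      have hs1 := hs.2
      rw [abs_le]
      have hkle : (k : ℝ) ≤ s * N := by
        rcases le_or_gt ((N : ℝ) - 1) (s * N) with h | h
        · have : (k : ℝ) ≤ (N : ℝ) - 1 := by
            have : k ≤ N - 1 := min_le_right _ _
            have := (Nat.cast_le (α := ℝ)).mpr this
            push_cast [hN1] at this ⊢
            linarith
          linarith
        · have hfl : (⌊s * N⌋₊ : ℝ) ≤ s * N := Nat.floor_le (by positivity)
          have : (k : ℝ) ≤ (⌊s * N⌋₊ : ℝ) := by
            exact_mod_cast min_le_left _ _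
          linarith
      have hkge : s * N ≤ (k : ℝ) + 1 := by
        rcases le_or_gt ((N : ℝ)) (s * N + 1) with h | h
        · -- s*N ≥ N - 1, then k = ?; we need s*N ≤ k+1. Use s ≤ 1 so s*N ≤ N.
          -- If ⌊sN⌋ ≥ N-1 then k = N-1 and k+1 = N ≥ sN. Else k = ⌊sN⌋ and sN < k+1.
          rcases le_or_gt (N - 1) ⌊s * N⌋₊ with h2 | h2
          · have hk' : k = N - 1 := by omega
            have : s * N ≤ N := by nlinarith
            rw [hk']
            push_cast [hN1]
            linarith
          · have hk' : k = ⌊s * N⌋₊ := by omega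
            have := Nat.lt_floor_add_one (s * N)
            rw [hk']; push_cast; linarith
        · rcases le_or_gt (N - 1) ⌊s * N⌋₊ with h2 | h2
          · have hfl : (⌊s * N⌋₊ : ℝ) ≤ s * N := Nat.floor_le (by positivity)
            have h3 : ((N : ℝ) - 1) ≤ (⌊s * N⌋₊ : ℝ) := by
              have := (Nat.cast_le (α := ℝ)).mpr h2
              push_cast [hN1] at this
              linarith
            linarith
          · have hk' : k = ⌊s * N⌋₊ := by omega
            have := Nat.lt_floor_add_one (s * N)
            rw [hk']; push_cast; linarith
      have h2N : (0:ℝ) < 2 * N := by positivity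
      constructor
      · have h1 : (2 * (k:ℝ) + 1) / (2 * N) ≤ s + 1 / (2 * N) := by
          rw [div_le_iff₀ h2N]
          have heq : (s + 1/(2*(N:ℝ))) * (2*(N:ℝ)) = 2*(s*(N:ℝ)) + 1 := by
            field_simp
          rw [heq]; linarith
        show -(1/(2*(N:ℝ))) ≤ s - pt k
        simp only [hptdef]; linarith
      · have h2 : s - 1/(2*(N:ℝ)) ≤ (2 * (k:ℝ) + 1) / (2 * N) := by
          rw [le_div_iff₀ h2N]
          have heq : (s - 1/(2*(N:ℝ))) * (2*(N:ℝ)) = 2*(s*(N:ℝ)) - 1 := by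
            field_simp
          rw [heq]; linarith
        show s - pt k ≤ 1/(2*(N:ℝ))
        simp only [hptdef]; linarith
    have hpt_mem : pt k ∈ Set.Icc (0:ℝ) 1 := by
      constructor
      · apply div_nonneg (by positivity) (by positivity)
      · rw [div_le_one (by positivity)]
        have : (k : ℝ) + 1 ≤ N := by exact_mod_cast hkN
        linarith
    refine Set.mem_iUnion₂.mpr ⟨pt k, ?_, ?_⟩
    · exact Finset.mem_image_of_mem pt (Finset.mem_range.mpr hkN)
    · intro j hj
      calc dist (g^[j] (γ (pt k))) (g^[j] (γ s))
          ≤ Λ ^ j * dist (γ (pt k)) (γ s) := iter_lip Λ hΛ g hg _ _ j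
        _ ≤ Λ ^ m * dist (γ (pt k)) (γ s) := by
            apply mul_le_mul_of_nonneg_right (pow_le_pow_right₀ hΛ hj) dist_nonneg
        _ ≤ Λ ^ m * (ε * |pt k - s|) := by
            apply mul_le_mul_of_nonneg_left (hγ _ hpt_mem _ hs) (by positivity)
        _ ≤ (N : ℝ) * (ε * (1 / (2 * N))) := by
            apply mul_le_mul hΛmN ?_ (by positivity) (by positivity)
            apply mul_le_mul_of_nonneg_left ?_ (le_of_lt hε)
            rw [abs_sub_comm]; exact hclose
        _ = ε / 2 := by field_simp
        _ < ε := by linarith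
end
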